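/- arXiv:1910.14153 — 9 statements merged into one kernel-verified Lean document; each statement's English description precedes it below -/
import Mathlib

section
/- If a finite simple graph G admits a track layout with tracks indexed by ℕ in which every edge has span at most s, where s ≥ 1, then the track number of G is at most 2s + 1. -/
/-- A track layout of `G` with tracks indexed by `T`: an injective position map,
adjacent vertices on distinct tracks, and no X-crossing. -/
def IsTrackLayout {V : Type*} {T : Type*} (G : SimpleGraph V)
    (track : V → T) (pos : V → ℕ) : Prop :=
  Function.Injective pos ∧
  (∀ ⦃u v⦄, G.Adj u v → track u ≠ track v) ∧
  (∀ ⦃u v x y⦄, G.Adj u v → G.Adj x y → track u = track x → track v = track y →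
    pos u < pos x → pos y < pos v → False)

/-- The track number of `G`: the least `t` such that `G` has a `t`-track layout. -/
noncomputable def trackNumber {V : Type*} (G : SimpleGraph V) : ℕ :=
  sInf {t | ∃ (track : V → Fin t) (pos : V → ℕ), IsTrackLayout G track pos}

private lemma mod_eq_le_of_div_le {m a b : ℕ} (hm : 0 < m) (h : a % m = b % m)
    (h2 : a / m ≤ b / m) : a ≤ b := by
  have ha := Nat.div_add_mod a m
  have hb := Nat.div_add_mod b m
  have := Nat.mul_le_mul_left m h2
  omega

private lemma add_le_of_mod_eq_lt {m a b : ℕ} (hm : 0 < m) (h : a % m = b % m)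
    (h2 : a < b) : a + m ≤ b := by
  have hd : m ∣ b - a := (Nat.modEq_iff_dvd' (le_of_lt h2)).mp h
  have := Nat.le_of_dvd (by omega) hd
  omega

private lemma eq_of_mod_eq_dist_lt {m a b : ℕ} (hm : 0 < m) (h : a % m = b % m)
    (h2 : a < b + m) (h3 : b < a + m) : a = b := by
  rcases lt_trichotomy a b with hlt | he | hlt
  · have := add_le_of_mod_eq_lt hm h hlt; omega
  · exact he
  · have := add_le_of_mod_eq_lt hm h.symm hlt; omega

/-- If a finite graph admits a track layout with tracks indexed by `ℕ` in which every
edge has span at most `s ≥ 1`, then its track number is at most `2s + 1`. -/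
theorem trackNumber_le_of_span_le {V : Type*} [Fintype V] (G : SimpleGraph V)
    (s : ℕ) (hs : 1 ≤ s) (track : V → ℕ) (pos : V → ℕ)
    (hlayout : IsTrackLayout G track pos)
    (hspan : ∀ ⦃u v⦄, G.Adj u v → Nat.dist (track u) (track v) ≤ s) :
    trackNumber G ≤ 2 * s + 1 := by
  obtain ⟨hinj, hdis, hcross⟩ := hlayout
  set m : ℕ := 2 * s + 1 with hm
  have hm0 : 0 < m := by omega
  set N : ℕ := (Finset.univ.sup pos) + 1 with hNdef
  have hN : ∀ v, pos v < N := fun v =>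
    Nat.lt_succ_of_le (Finset.le_sup (Finset.mem_univ v))
  set track' : V → Fin m := fun v => ⟨track v % m, Nat.mod_lt _ hm0⟩ with htr'
  set pos' : V → ℕ := fun v => pos v + (track v / m) * N with hpos'
  -- span as linear inequalities
  have hspan' : ∀ ⦃u v⦄, G.Adj u v → track u ≤ track v + s ∧ track v ≤ track u + s := by
    intro u v h
    have := hspan h
    rw [Nat.dist] at this
    omega
  -- quotient comparison from pos' comparison
  have hq : ∀ u x : V, pos' u < pos' x → track u / m ≤ track x / m := by
    intro u x h
    by_contra hc
    push_neg at hc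
    have h1 : (track x / m + 1) * N ≤ (track u / m) * N :=
      Nat.mul_le_mul_right N (by omega)
    have h2 : (track x / m + 1) * N = (track x / m) * N + N := by ring
    have := hN x
    have := hN u
    simp only [hpos'] at h
    omega
  refine Nat.sInf_le ⟨track', pos', ?_, ?_, ?_⟩
  · -- injective
    intro a b h
    have ha : pos' a % N = pos a := by
      simp only [hpos', Nat.add_mul_mod_self_right]
      exact Nat.mod_eq_of_lt (hN a)
    have hb : pos' b % N = pos b := by
      simp only [hpos', Nat.add_mul_mod_self_right]
      exact Nat.mod_eq_of_lt (hN b)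
    apply hinj
    rw [← ha, ← hb, h]
  · -- adjacent vertices on distinct tracks
    intro u v h hne
    have hmod : track u % m = track v % m := by
      simpa [htr', Fin.ext_iff] using hne
    obtain ⟨h1, h2⟩ := hspan' h
    have := eq_of_mod_eq_dist_lt hm0 hmod (by omega) (by omega)
    exact hdis h this
  · -- no X-crossing
    intro u v x y huv hxy h1 h2 h3 h4
    have h1' : track u % m = track x % m := by simpa [htr', Fin.ext_iff] using h1
    have h2' : track v % m = track y % m := by simpa [htr', Fin.ext_iff] using h2
    have hqux : track u / m ≤ track x / m := hq u x h3
    have hqyv : track y / m ≤ track v / m := hq y v h4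
    have hux : track u ≤ track x := mod_eq_le_of_div_le hm0 h1' hqux
    have hyv : track y ≤ track v := mod_eq_le_of_div_le hm0 h2'.symm hqyv
    obtain ⟨s1, s2⟩ := hspan' huv
    obtain ⟨s3, s4⟩ := hspan' hxy
    -- track u = track x
    have htux : track u = track x := by
      rcases eq_or_lt_of_le hux with he | hlt
      · exact he
      · exact absurd (add_le_of_mod_eq_lt hm0 h1' hlt) (by omega)
    -- track v = track y
    have htvy : track v = track y :=
      eq_of_mod_eq_dist_lt hm0 h2' (by omega) (by omega)
    -- now quotients are equal, so pos comparisons descend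
    have hpu : pos u < pos x := by
      simp only [hpos'] at h3
      rw [htux] at h3
      omega
    have hpy : pos y < pos v := by
      simp only [hpos'] at h4
      rw [htvy] at h4
      omega
    exact hcross huv hxy htux htvy hpu hpy
end

section
/- Let I be a finite type of cardinality B and let s ≥ 1. If a finite simple graph G admits a track layout with tracks indexed by ℕ × I in which every edge has partial span at most s, then the track number of G is at most (2s + 1)·B. -/
lemma natDist_eq' (a b : ℕ) : Nat.dist a b = a - b + (b - a) := rfl

lemma dvd_dist_of_mod_eq' {n a b : ℕ} (h : a % n = b % n) : n ∣ Nat.dist a b := by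
  rcases le_total a b with hab | hab
  · rw [Nat.dist_eq_sub_of_le hab]
    exact (Nat.modEq_iff_dvd' hab).mp h
  · rw [Nat.dist_eq_sub_of_le_right hab]
    exact (Nat.modEq_iff_dvd' hab).mp h.symm

/-- Wrapping lemma: if a finite graph admits a track layout with tracks indexed by
`ℕ × I`, where `I` has cardinality `B`, in which every edge has partial span at most
`s ≥ 1`, then its track number is at most `(2s + 1) · B`. -/
theorem trackNumber_le_of_partialSpan_le {V : Type*} {I : Type*} [Fintype V] [Fintype I]
    (G : SimpleGraph V) (s B : ℕ) (hs : 1 ≤ s) (hB : Fintype.card I = B)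
    (track : V → ℕ × I) (pos : V → ℕ)
    (hlayout : IsTrackLayout G track pos)
    (hspan : ∀ ⦃u v⦄, G.Adj u v → Nat.dist (track u).1 (track v).1 ≤ s) :
    trackNumber G ≤ (2 * s + 1) * B := by
  obtain ⟨hinj, hdiff, hX⟩ := hlayout
  set n := 2 * s + 1 with hn
  have hn0 : 0 < n := by omega
  set M := Finset.univ.sup pos with hM
  have hposle : ∀ v : V, pos v ≤ M := fun v => Finset.le_sup (Finset.mem_univ v)
  have hcard : Fintype.card (Fin n × I) = (2 * s + 1) * B := by
    simp [hB, hn]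
  let e : Fin n × I ≃ Fin ((2 * s + 1) * B) := Fintype.equivFinOfCardEq hcard
  let tr : V → Fin ((2 * s + 1) * B) := fun v =>
    e (⟨(track v).1 % n, Nat.mod_lt _ hn0⟩, (track v).2)
  let p : V → ℕ := fun v => (track v).1 * (M + 1) + pos v
  apply Nat.sInf_le
  refine ⟨tr, p, ?_, ?_, ?_⟩
  · intro u v huv
    have hu := hposle u; have hv := hposle v
    have h1 : pos u = pos v := by
      simp only [p] at huv
      have := congrArg (fun t => t % (M + 1)) huv
      simp only [Nat.mul_add_mod'] at this
      rwa [Nat.mod_eq_of_lt (Nat.lt_succ_of_le hu),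
        Nat.mod_eq_of_lt (Nat.lt_succ_of_le hv)] at this
    exact hinj h1
  · intro u v hadj h
    have h2 := e.injective h
    rw [Prod.mk.injEq] at h2
    have h1 : (track u).1 % n = (track v).1 % n := by
      have := congrArg Fin.val h2.1
      simpa using this
    have hsec : (track u).2 = (track v).2 := h2.2
    have hd := hspan hadj
    have hdvd := dvd_dist_of_mod_eq' h1
    have hdlt : Nat.dist (track u).1 (track v).1 < n := by omega
    have hdz : Nat.dist (track u).1 (track v).1 = 0 :=
      Nat.eq_zero_of_dvd_of_lt hdvd hdlt
    rw [natDist_eq'] at hdz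
    have hfst : (track u).1 = (track v).1 := by omega
    exact hdiff hadj (Prod.ext hfst hsec)
  · intro u v x y hadj1 hadj2 htu htv hpu hpy
    have h2u := e.injective htu
    have h2v := e.injective htv
    rw [Prod.mk.injEq] at h2u h2v
    have mu : (track u).1 % n = (track x).1 % n := by
      have := congrArg Fin.val h2u.1; simpa using this
    have mv : (track v).1 % n = (track y).1 % n := by
      have := congrArg Fin.val h2v.1; simpa using this
    have su : (track u).2 = (track x).2 := h2u.2
    have sv : (track v).2 = (track y).2 := h2v.2
    have d1 := hspan hadj1
    have d2 := hspan hadj2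
    rw [natDist_eq'] at d1 d2
    have hmu := hposle u; have hmx := hposle x
    have hmv := hposle v; have hmy := hposle y
    simp only [p] at hpu hpy
    have hux : (track u).1 ≤ (track x).1 := by nlinarith [hposle u, hposle x]
    have hyv : (track y).1 ≤ (track v).1 := by nlinarith [hposle y, hposle v]
    by_cases hcase : (track u).1 = (track x).1
    · -- then also (track v).1 = (track y).1
      have hdvy := dvd_dist_of_mod_eq' mv
      have hdlt : Nat.dist (track v).1 (track y).1 < n := by
        rw [natDist_eq']; omega
      have hdz := Nat.eq_zero_of_dvd_of_lt hdvy hdlt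
      rw [natDist_eq'] at hdz
      have hvy : (track v).1 = (track y).1 := by omega
      have hposux : pos u < pos x := by
        rw [hcase] at hpu; omega
      have hposyv : pos y < pos v := by
        rw [hvy] at hpy; omega
      exact hX hadj1 hadj2 (Prod.ext hcase su) (Prod.ext hvy sv) hposux hposyv
    · have hdvd := dvd_dist_of_mod_eq' mu
      have hdpos : 0 < Nat.dist (track u).1 (track x).1 := by
        rw [natDist_eq']; omega
      have hbig := Nat.le_of_dvd hdpos hdvd
      rw [natDist_eq'] at hbig
      omega
end

section
/- For every 2-track layout of a path graph, the set of all edges of the path is nicely ordered with respect to the layout. -/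
/-- `C₁ ≺ C₂` : on every common track, all vertices of `C₁` precede those of `C₂`. -/
def CliquePrec {V : Type*} {T : Type*} (track : V → T) (pos : V → ℕ)
    (C₁ C₂ : Set V) : Prop :=
  ∀ u ∈ C₁, ∀ w ∈ C₂, track u = track w → pos u ≤ pos w

/-- A family of cliques is nicely ordered if it can be enumerated as `C₁, …, C_m`
with `C_i ≺ C_j` whenever `i < j`. -/
def NicelyOrdered {V : Type*} {T : Type*} (track : V → T) (pos : V → ℕ)
    (S : Set (Set V)) : Prop :=
  ∃ l : List (Set V), l.Nodup ∧ (∀ C, C ∈ l ↔ C ∈ S) ∧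
    l.Pairwise (CliquePrec track pos)

/-- A family of cliques is `c`-colorable with respect to a track layout if it can be
partitioned into `c` nicely ordered subfamilies. -/
def CliqueColorable {V : Type*} {T : Type*} (track : V → T) (pos : V → ℕ)
    (c : ℕ) (S : Set (Set V)) : Prop :=
  ∃ P : Fin c → Set (Set V),
    (∀ C ∈ S, ∃ i, C ∈ P i) ∧ (∀ i, P i ⊆ S) ∧
    (∀ i j, i ≠ j → Disjoint (P i) (P j)) ∧
    (∀ i, NicelyOrdered track pos (P i))


noncomputable def edgeW {n : ℕ} (pos : Fin n → ℕ) (C : Set (Fin n)) : ℕ :=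
  ∑ v : Fin n, Set.indicator C pos v

lemma edgeW_pair {n : ℕ} (pos : Fin n → ℕ) {u v : Fin n} (huv : u ≠ v) :
    edgeW pos {u, v} = pos u + pos v := by
  classical
  unfold edgeW
  simp only [Set.indicator_apply, Set.mem_insert_iff, Set.mem_singleton_iff]
  rw [Finset.sum_ite, Finset.sum_const, Finset.filter_or, Finset.filter_eq',
    Finset.filter_eq']
  simp only [Finset.mem_univ, if_true]
  rw [Finset.sum_union (by simp [huv, huv.symm]), Finset.sum_singleton, Finset.sum_singleton]
  simp

lemma dichotomy {V T : Type*} {G : SimpleGraph V} {track : V → T} {pos : V → ℕ}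
    (h : IsTrackLayout G track pos) {u v x y : V}
    (huv : G.Adj u v) (hxy : G.Adj x y) (h1 : track u = track x) (h2 : track v = track y) :
    (pos u ≤ pos x ∧ pos v ≤ pos y) ∨ (pos x ≤ pos u ∧ pos y ≤ pos v) := by
  obtain ⟨hinj, htrk, hX⟩ := h
  rcases lt_trichotomy (pos u) (pos x) with hlt | heq | hgt
  · left; refine ⟨hlt.le, ?_⟩
    by_contra hvy; push_neg at hvy
    exact hX huv hxy h1 h2 hlt hvy
  · have : u = x := hinj heq
    subst this
    rcases le_total (pos v) (pos y) with h' | h'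
    · exact Or.inl ⟨le_rfl, h'⟩
    · exact Or.inr ⟨le_rfl, h'⟩
  · right; refine ⟨hgt.le, ?_⟩
    by_contra hyv; push_neg at hyv
    exact hX hxy huv h1.symm h2.symm hgt hyv

lemma prec_of_le {V T : Type*} (track : V → T) (pos : V → ℕ) {u v x y : V}
    (h1 : track u = track x) (h2 : track v = track y) (huv : track u ≠ track v)
    (hux : pos u ≤ pos x) (hvy : pos v ≤ pos y) :
    CliquePrec track pos {u, v} {x, y} := by
  intro a ha b hb hab
  simp only [Set.mem_insert_iff, Set.mem_singleton_iff] at ha hb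
  rcases ha with rfl | rfl <;> rcases hb with rfl | rfl
  · exact hux
  · exact absurd (hab.trans h2.symm) huv
  · exact absurd (h1.trans hab.symm) huv
  · exact hvy

lemma fin2_align (a b c d : Fin 2) (h1 : a ≠ b) (h2 : c ≠ d) :
    (a = c ∧ b = d) ∨ (a = d ∧ b = c) := by
  fin_cases a <;> fin_cases b <;> fin_cases c <;> fin_cases d <;> simp_all

lemma edge_prec_aligned {n : ℕ} {track : Fin n → Fin 2} {pos : Fin n → ℕ}
    (h : IsTrackLayout (SimpleGraph.pathGraph n) track pos) {u v x y : Fin n}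
    (huv : (SimpleGraph.pathGraph n).Adj u v) (hxy : (SimpleGraph.pathGraph n).Adj x y)
    (h1 : track u = track x) (h2 : track v = track y)
    (hne : ({u, v} : Set (Fin n)) ≠ {x, y})
    (hw : edgeW pos {u, v} ≤ edgeW pos {x, y}) :
    CliquePrec track pos {u, v} {x, y} := by
  have htuv := h.2.1 huv
  rcases dichotomy h huv hxy h1 h2 with ⟨ha, hb⟩ | ⟨ha, hb⟩
  · exact prec_of_le track pos h1 h2 htuv ha hb
  · rw [edgeW_pair pos huv.ne, edgeW_pair pos hxy.ne] at hw
    have hux : pos u = pos x := by omega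
    have hvy : pos v = pos y := by omega
    have := h.1 hux
    have := h.1 hvy
    subst this; subst ‹u = x›
    exact absurd rfl hne

/-- For every `2`-track layout of a path graph, the set of all edges of the path
(as `2`-cliques) is nicely ordered with respect to the layout. -/
theorem pathGraph_two_track_layout_nicelyOrdered (n : ℕ)
    (track : Fin n → Fin 2) (pos : Fin n → ℕ)
    (h : IsTrackLayout (SimpleGraph.pathGraph n) track pos) :
    NicelyOrdered track pos
      {C : Set (Fin n) | ∃ u v, (SimpleGraph.pathGraph n).Adj u v ∧ C = {u, v}} := by

  classical
  set S : Set (Set (Fin n)) :=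
    {C : Set (Fin n) | ∃ u v, (SimpleGraph.pathGraph n).Adj u v ∧ C = {u, v}} with hSdef
  have hfin : S.Finite := Set.toFinite S
  set r : Set (Fin n) → Set (Fin n) → Prop := fun C D => edgeW pos C ≤ edgeW pos D with hr
  haveI : DecidableRel r := fun _ _ => Classical.dec _
  haveI : IsTotal (Set (Fin n)) r := ⟨fun a b => le_total _ _⟩
  haveI : IsTrans (Set (Fin n)) r := ⟨fun a b c => le_trans⟩
  set l := List.insertionSort r hfin.toFinset.toList with hl
  have hperm : l.Perm hfin.toFinset.toList := List.perm_insertionSort r _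
  have hnd : l.Nodup := hperm.nodup_iff.mpr hfin.toFinset.nodup_toList
  have hmem : ∀ C, C ∈ l ↔ C ∈ S := by
    intro C
    rw [hperm.mem_iff, Finset.mem_toList, Set.Finite.mem_toFinset]
  refine ⟨l, hnd, hmem, ?_⟩
  have hs : l.Pairwise r := List.pairwise_insertionSort r _
  have hcomb := hs.and hnd
  refine hcomb.imp_of_mem ?_
  intro C D hCl hDl ⟨hrCD, hneCD⟩
  obtain ⟨u, v, huv, rfl⟩ := (hmem C).mp hCl
  obtain ⟨x, y, hxy, rfl⟩ := (hmem D).mp hDl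
  rcases fin2_align (track u) (track v) (track x) (track y) (h.2.1 huv) (h.2.1 hxy)
    with ⟨h1, h2⟩ | ⟨h1, h2⟩
  · exact edge_prec_aligned h huv hxy h1 h2 hneCD hrCD
  · rw [Set.pair_comm x y] at hneCD hrCD ⊢
    exact edge_prec_aligned h huv hxy.symm h1 h2 hneCD hrCD
end

section
/- Every tree admits a 3-track layout with respect to which the set of all edges of the tree can be partitioned into two nicely ordered families (i.e., a 2-clique-colorable 3-track layout). -/
/-!
Root the tree at `r`, put every vertex `v` on track `dist r v % 3`, and number the vertices in
breadth-first order: by depth, and within a level by the position of the parent. Every edge joins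
a vertex to its parent, so two edges between the same pair of tracks join the same two consecutive
levels, and since the parent's position is monotone in the child's position they cannot cross.
Colour an edge by the parity of its parent's depth and order each colour class by the child. For
edges `a'a` before `b'b` of the same colour, a clash of `a` and `b'` on a track needs
`dist a ≡ dist b' [MOD 3]`; as `dist a` and `dist b'` have different parities and
`dist a ≤ dist b' + 1`, this forces `dist a < dist b'`.
-/

open Function Set

section CliqueFamilies

variable {V ι T : Type*} {track : V → T} {pos : V → ℕ}

theorem nicelyOrdered_image {s : Set ι} (hs : s.Finite) {e : ι → Set V} (he : InjOn e s)
    {κ : ι → ℕ} (hκ : Injective κ)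
    (hprec : ∀ a ∈ s, ∀ b ∈ s, κ a < κ b → CliquePrec track pos (e a) (e b)) :
    NicelyOrdered track pos (e '' s) := by
  let : LinearOrder ι := LinearOrder.lift' κ hκ
  refine ⟨hs.toFinset.sort.map e, ?_, by simp, ?_⟩
  · exact (Finset.sort_nodup _ _).map_on fun a ha b hb hab =>
      he (by simpa using ha) (by simpa using hb) hab
  · refine List.pairwise_map.2 ((Finset.sortedLT_sort _).pairwise.imp_of_mem ?_)
    intro a b ha hb hab
    exact hprec a (by simpa using ha) b (by simpa using hb) hab

theorem cliqueColorable_image {c : ℕ} {s : Set ι} {e : ι → Set V} (he : InjOn e s)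
    (col : ι → Fin c) (hcol : ∀ i, NicelyOrdered track pos (e '' {a ∈ s | col a = i})) :
    CliqueColorable track pos c (e '' s) := by
  refine ⟨fun i => e '' {a ∈ s | col a = i}, ?_, fun i => image_mono (sep_subset _ _), ?_, hcol⟩
  · rintro _ ⟨a, ha, rfl⟩
    exact ⟨col a, a, ⟨ha, rfl⟩, rfl⟩
  · intro i j hij
    refine Set.disjoint_left.2 ?_
    rintro _ ⟨a, ⟨ha, rfl⟩, rfl⟩ ⟨b, ⟨hb, hbj⟩, hba⟩
    exact hij (he hb ha hba ▸ hbj)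

end CliqueFamilies

namespace SimpleGraph

variable {V : Type*} {G : SimpleGraph V} {r u v : V}

namespace Connected

variable (hC : G.Connected)

noncomputable def parent (r v : V) : V :=
  (hC.exists_walk_length_eq_dist r v).choose.penultimate

noncomputable def parentEdge (r v : V) : Set V :=
  {hC.parent r v, v}

theorem adj_parent (hv : v ≠ r) : G.Adj (hC.parent r v) v :=
  Walk.adj_penultimate <| by
    rw [← Walk.length_eq_zero_iff, (hC.exists_walk_length_eq_dist r v).choose_spec]
    exact hC.dist_eq_zero_iff.not.2 hv.symm

theorem dist_parent_add_one (hv : v ≠ r) : G.dist r (hC.parent r v) + 1 = G.dist r v := by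
  set p := (hC.exists_walk_length_eq_dist r v).choose
  have hp : p.length = G.dist r v := (hC.exists_walk_length_eq_dist r v).choose_spec
  have hle : G.dist r (hC.parent r v) ≤ G.dist r v - 1 :=
    hp ▸ p.length_dropLast ▸ dist_le p.dropLast
  have hpos : G.dist r v ≠ 0 := hC.dist_eq_zero_iff.not.2 hv.symm
  have := (hC.adj_parent hv).diff_dist_adj (u := r)
  omega

theorem injOn_parentEdge (r : V) : InjOn (hC.parentEdge r) {v | v ≠ r} := by
  intro a ha b hb hab
  rcases Set.pair_eq_pair_iff.1 hab with ⟨-, h⟩ | ⟨hpa, hpb⟩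
  · exact h
  · have hda := hC.dist_parent_add_one ha
    have hdb := hC.dist_parent_add_one hb
    rw [hpa] at hda
    rw [← hpb] at hdb
    omega

end Connected

theorem IsAcyclic.eq_parent_of_adj (hA : G.IsAcyclic) (hC : G.Connected) (hadj : G.Adj u v)
    (h : G.dist r u + 1 = G.dist r v) : u = hC.parent r v := by
  classical
  set p := (hC.exists_walk_length_eq_dist r v).choose
  have hp : p.IsPath :=
    p.isPath_of_length_eq_dist (hC.exists_walk_length_eq_dist r v).choose_spec
  obtain ⟨q, hq, hqlen⟩ := hC.exists_path_of_dist r u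
  have hvq : v ∉ q.support := fun hv => by
    have := (dist_le (q.takeUntil v hv)).trans (q.length_takeUntil_le_length hv)
    omega
  exact hA.eq_penultimate_of_adj_end hp hadj.symm
    (hA.mem_support_of_ne_mem_support_of_adj_of_isPath hp hq hadj.symm hvq)

theorem IsAcyclic.eq_parent_or_eq_parent_of_adj (hA : G.IsAcyclic) (hC : G.Connected) (r : V)
    (hadj : G.Adj u v) :
    (u = hC.parent r v ∧ G.dist r u + 1 = G.dist r v) ∨
      (v = hC.parent r u ∧ G.dist r v + 1 = G.dist r u) := by
  rcases hA.dist_eq_dist_add_one_of_adj_of_reachable r hadj (hC r u) with h | h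
  · exact .inr ⟨hA.eq_parent_of_adj hC hadj.symm h.symm, h.symm⟩
  · exact .inl ⟨hA.eq_parent_of_adj hC hadj h.symm, h.symm⟩

theorem IsAcyclic.image_parentEdge (hA : G.IsAcyclic) (hC : G.Connected) (r : V) :
    hC.parentEdge r '' {v | v ≠ r} = {C | ∃ u v, G.Adj u v ∧ C = {u, v}} := by
  ext C
  constructor
  · rintro ⟨v, hv, rfl⟩
    exact ⟨_, _, hC.adj_parent hv, rfl⟩
  · rintro ⟨u, v, hadj, rfl⟩
    rcases hA.eq_parent_or_eq_parent_of_adj hC r hadj with ⟨rfl, h⟩ | ⟨rfl, h⟩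
    · exact ⟨v, by rintro rfl; simp at h, rfl⟩
    · exact ⟨u, by rintro rfl; simp at h, pair_comm _ _⟩

namespace Connected

variable [Finite V] (hC : G.Connected) (r : V)

/-- Positions in breadth-first order: the key of a vertex is its parent's key followed by one
more digit in base `Nat.card V + 1`, so keys compare first by depth, then by the parents' keys. -/
noncomputable def bfsKey (v : V) : ℕ :=
  if h : G.dist r v = 0 then 0
  else bfsKey (hC.parent r v) * (Nat.card V + 1) + (Finite.equivFin V v + 1)
termination_by G.dist r v
decreasing_by
  have := hC.dist_parent_add_one (v := v) (r := r) (by rintro rfl; exact h dist_self)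
  omega

theorem bfsKey_self : hC.bfsKey r r = 0 := by
  rw [bfsKey, dif_pos dist_self]

variable {r}

theorem bfsKey_of_ne (hv : v ≠ r) :
    hC.bfsKey r v =
      hC.bfsKey r (hC.parent r v) * (Nat.card V + 1) + (Finite.equivFin V v + 1) := by
  rw [bfsKey, dif_neg (hC.dist_eq_zero_iff.not.2 hv.symm)]

theorem bfsKey_pos (hv : v ≠ r) : 0 < hC.bfsKey r v := by
  rw [hC.bfsKey_of_ne hv]
  omega

theorem bfsKey_mod_of_ne (hv : v ≠ r) :
    hC.bfsKey r v % (Nat.card V + 1) = Finite.equivFin V v + 1 := by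
  rw [hC.bfsKey_of_ne hv, Nat.mul_add_mod_of_lt]
  exact Nat.add_lt_add_right (Finite.equivFin V v).isLt 1

theorem bfsKey_lt_of_parent_lt (hu : u ≠ r) (hv : v ≠ r)
    (h : hC.bfsKey r (hC.parent r u) < hC.bfsKey r (hC.parent r v)) :
    hC.bfsKey r u < hC.bfsKey r v := by
  have hdigit := (Finite.equivFin V u).isLt
  rw [hC.bfsKey_of_ne hu, hC.bfsKey_of_ne hv]
  calc _ < (hC.bfsKey r (hC.parent r u) + 1) * (Nat.card V + 1) := by rw [add_one_mul]; omega
    _ ≤ hC.bfsKey r (hC.parent r v) * (Nat.card V + 1) := Nat.mul_le_mul_right _ h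
    _ ≤ _ := Nat.le_add_right _ _

theorem bfsKey_lt_of_dist_lt {u v : V} (h : G.dist r u < G.dist r v) :
    hC.bfsKey r u < hC.bfsKey r v := by
  have hv : v ≠ r := by rintro rfl; simp at h
  rcases eq_or_ne u r with rfl | hu
  · rw [bfsKey_self]
    exact hC.bfsKey_pos hv
  · have := hC.dist_parent_add_one hu
    have := hC.dist_parent_add_one hv
    exact hC.bfsKey_lt_of_parent_lt hu hv (bfsKey_lt_of_dist_lt (by omega))
termination_by G.dist r u
decreasing_by omega

variable (r) in
theorem bfsKey_injective : Injective (hC.bfsKey r) := by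
  intro u v h
  by_cases hu : u = r <;> by_cases hv : v = r
  · rw [hu, hv]
  · rw [hu, bfsKey_self] at h
    exact absurd h (hC.bfsKey_pos hv).ne
  · rw [hv, bfsKey_self] at h
    exact absurd h (hC.bfsKey_pos hu).ne'
  · have := hC.bfsKey_mod_of_ne hu ▸ hC.bfsKey_mod_of_ne hv ▸ congrArg (· % (Nat.card V + 1)) h
    exact (Finite.equivFin V).injective (Fin.ext (by simpa using this))

theorem dist_le_of_bfsKey_lt (h : hC.bfsKey r u < hC.bfsKey r v) : G.dist r u ≤ G.dist r v :=
  not_lt.1 fun h' => (hC.bfsKey_lt_of_dist_lt h').not_gt h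

theorem cliquePrec_parentEdge {a b : V} (ha : a ≠ r) (hb : b ≠ r)
    (hparity : G.dist r (hC.parent r a) % 2 = G.dist r (hC.parent r b) % 2)
    (hlt : hC.bfsKey r a < hC.bfsKey r b) :
    CliquePrec (fun v => Fin.ofNat 3 (G.dist r v)) (hC.bfsKey r)
      (hC.parentEdge r a) (hC.parentEdge r b) := by
  have hda := hC.dist_parent_add_one ha
  have hdb := hC.dist_parent_add_one hb
  have hab := hC.dist_le_of_bfsKey_lt hlt
  intro x hx y hy hxy
  simp only [Fin.ext_iff, Fin.val_ofNat] at hxy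
  rcases hx with rfl | rfl <;> rcases hy with rfl | rfl
  · exact not_lt.1 fun h => (hC.bfsKey_lt_of_parent_lt hb ha h).not_gt hlt
  · exact (hC.bfsKey_lt_of_dist_lt (by omega)).le
  · exact (hC.bfsKey_lt_of_dist_lt (by omega)).le
  · exact hlt.le

end Connected

theorem IsAcyclic.isTrackLayout_bfs [Finite V] (hA : G.IsAcyclic) (hC : G.Connected) (r : V) :
    IsTrackLayout G (fun v => Fin.ofNat 3 (G.dist r v)) (hC.bfsKey r) := by
  have hd := fun {u v : V} (h : G.Adj u v) => hA.eq_parent_or_eq_parent_of_adj hC r h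
  refine ⟨hC.bfsKey_injective r, fun u v huv htr => ?_, fun u v x y huv hxy hux hvy hlt hlt' => ?_⟩
  · simp only [Fin.ext_iff, Fin.val_ofNat] at htr
    rcases hd huv with ⟨-, h⟩ | ⟨-, h⟩ <;> omega
  · simp only [Fin.ext_iff, Fin.val_ofNat] at hux hvy
    have h₁ := hC.dist_le_of_bfsKey_lt hlt
    have h₂ := hC.dist_le_of_bfsKey_lt hlt'
    rcases hd huv with ⟨rfl, hv⟩ | ⟨rfl, hu⟩ <;> rcases hd hxy with ⟨rfl, hy⟩ | ⟨rfl, hx⟩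
    · have hv' : v ≠ r := by rintro rfl; simp at hv
      have hy' : y ≠ r := by rintro rfl; simp at hy
      exact (hC.bfsKey_lt_of_parent_lt hv' hy' hlt).not_gt hlt'
    · omega
    · omega
    · have hu' : u ≠ r := by rintro rfl; simp at hu
      have hx' : x ≠ r := by rintro rfl; simp at hx
      exact (hC.bfsKey_lt_of_parent_lt hx' hu' hlt').not_gt hlt

end SimpleGraph

/-- Every tree admits a `3`-track layout with respect to which the set of all edges
of the tree (its maximal cliques) can be partitioned into two nicely ordered families. -/
theorem tree_twoCliqueColorable_three_tracks {V : Type*} [Fintype V]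
    (G : SimpleGraph V) (hG : G.IsTree) :
    ∃ (track : V → Fin 3) (pos : V → ℕ),
      IsTrackLayout G track pos ∧
      CliqueColorable track pos 2 {C : Set V | ∃ u v, G.Adj u v ∧ C = {u, v}} := by
  have hC := hG.connected
  obtain ⟨r⟩ := hC.nonempty
  refine ⟨_, _, hG.isAcyclic.isTrackLayout_bfs hC r, ?_⟩
  rw [← hG.isAcyclic.image_parentEdge hC r]
  refine cliqueColorable_image (hC.injOn_parentEdge r)
    (fun v => Fin.ofNat 2 (G.dist r (hC.parent r v))) fun i => ?_
  refine nicelyOrdered_image (toFinite _) ((hC.injOn_parentEdge r).mono (sep_subset _ _))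
    (hC.bfsKey_injective r) ?_
  rintro a ⟨ha, rfl⟩ b ⟨hb, hab⟩ hlt
  exact hC.cliquePrec_parentEdge ha hb (by simpa [Fin.ext_iff] using hab.symm) hlt
end

section
/- Every tree admits a track layout with tracks indexed by ℕ in which every edge has span exactly 1. -/
open SimpleGraph SimpleGraph.Walk in
/-- Appending an edge to a path that is shorter than `G.dist r v` gives a path. -/
private lemma concat_isPath_of_lt {V : Type*} {G : SimpleGraph V} {r w v : V}
    (q : G.Walk r w) (hq : q.IsPath) (hlt : q.length < G.dist r v)
    (hadj : G.Adj w v) : (q.concat hadj).IsPath := by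
  classical
  have hvq : v ∉ q.support := by
    intro hv
    have h1 : G.dist r v ≤ (q.takeUntil v hv).length := SimpleGraph.dist_le _
    have h2 : (q.takeUntil v hv).length ≤ q.length := length_takeUntil_le q hv
    omega
  rw [← isPath_reverse_iff, reverse_concat, cons_isPath_iff]
  exact ⟨hq.reverse, by simpa [support_reverse] using hvq⟩

open SimpleGraph SimpleGraph.Walk in
/-- In a tree, distances to the two endpoints of an edge differ by exactly one. -/
private lemma tree_adj_dist {V : Type*} {G : SimpleGraph V} (hG : G.IsTree) (r : V)
    {u v : V} (h : G.Adj u v) :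
    G.dist r u + 1 = G.dist r v ∨ G.dist r v + 1 = G.dist r u := by
  classical
  have hc := hG.isConnected
  have h1 : G.dist r v ≤ G.dist r u + 1 := by
    have := hc.dist_triangle (u := r) (v := u) (w := v)
    rwa [SimpleGraph.dist_eq_one_iff_adj.mpr h] at this
  have h2 : G.dist r u ≤ G.dist r v + 1 := by
    have := hc.dist_triangle (u := r) (v := v) (w := u)
    rwa [SimpleGraph.dist_eq_one_iff_adj.mpr h.symm] at this
  have hne : G.dist r u ≠ G.dist r v := by
    intro heq
    obtain ⟨p, hp, hlen⟩ := hc.exists_path_of_dist r u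
    have hvp : v ∉ p.support := by
      intro hv
      have t1 : G.dist r v ≤ (p.takeUntil v hv).length := SimpleGraph.dist_le _
      have t2 : G.dist v u ≤ (p.dropUntil v hv).length := SimpleGraph.dist_le _
      have t3 : (p.takeUntil v hv).length + (p.dropUntil v hv).length = p.length := by
        rw [← length_append, take_spec]
      have t4 : G.dist v u = 1 := SimpleGraph.dist_eq_one_iff_adj.mpr h.symm
      omega
    have hq : (p.concat h).IsPath := by
      rw [← isPath_reverse_iff, reverse_concat, cons_isPath_iff]
      exact ⟨hp.reverse, by simpa [support_reverse] using hvp⟩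
    obtain ⟨p', hp', hlen'⟩ := hc.exists_path_of_dist r v
    obtain ⟨q0, -, huniq⟩ := hG.existsUnique_path r v
    have e : p.concat h = p' := (huniq _ hq).trans (huniq _ hp').symm
    have : (p.concat h).length = p'.length := by rw [e]
    rw [length_concat, hlen, hlen'] at this
    omega
  omega

open SimpleGraph SimpleGraph.Walk in
/-- In a tree, the neighbor of `v` that is closer to the root is unique. -/
private lemma tree_unique_parent {V : Type*} {G : SimpleGraph V} (hG : G.IsTree) (r : V)
    {u x v : V} (hu : G.Adj u v) (hx : G.Adj x v)
    (hdu : G.dist r u + 1 = G.dist r v) (hdx : G.dist r x + 1 = G.dist r v) : u = x := by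
  have hc := hG.isConnected
  obtain ⟨p, hp, hlen⟩ := hc.exists_path_of_dist r u
  obtain ⟨p', hp', hlen'⟩ := hc.exists_path_of_dist r x
  have hq : (p.concat hu).IsPath := concat_isPath_of_lt p hp (by omega) hu
  have hq' : (p'.concat hx).IsPath := concat_isPath_of_lt p' hp' (by omega) hx
  obtain ⟨q0, -, huniq⟩ := hG.existsUnique_path r v
  have e : p.concat hu = p'.concat hx := (huniq _ hq).trans (huniq _ hq').symm
  have h2 : (p.concat hu).reverse.getVert 1 = (p'.concat hx).reverse.getVert 1 := by rw [e]
  simpa [reverse_concat, getVert_cons_succ, getVert_zero] using h2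

open SimpleGraph SimpleGraph.Walk in
/-- Every non-root vertex of a tree has a neighbor one step closer to the root. -/
private lemma tree_exists_parent {V : Type*} {G : SimpleGraph V} (hG : G.IsTree) (r v : V)
    (hv : v ≠ r) : ∃ u, G.Adj u v ∧ G.dist r u + 1 = G.dist r v := by
  have hc := hG.isConnected
  obtain ⟨p, hp, hlen⟩ := hc.exists_path_of_dist r v
  have hpos : 0 < G.dist r v := hc.pos_dist_of_ne (Ne.symm hv)
  have hnil : ¬ p.reverse.Nil := by
    rw [not_nil_iff_lt_length, length_reverse]
    omega
  obtain ⟨u, hadj, q, hcq⟩ := not_nil_iff.mp hnil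
  refine ⟨u, hadj.symm, ?_⟩
  have hql : q.length + 1 = G.dist r v := by
    have := congrArg SimpleGraph.Walk.length hcq
    rw [length_reverse, length_cons] at this
    omega
  have h1 : G.dist r u ≤ q.length := by
    have := SimpleGraph.dist_le q.reverse
    rwa [length_reverse] at this
  have h2 : G.dist r v ≤ G.dist r u + 1 := by
    have := hc.dist_triangle (u := r) (v := u) (w := v)
    rwa [SimpleGraph.dist_eq_one_iff_adj.mpr hadj.symm] at this
  omega

/-- Auxiliary position function built from a parent map: the position encodes the
sequence of labels along the ancestor chain, in base `Fintype.card V`. -/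
private noncomputable def trackAux {V : Type*} [Fintype V] (par : V → V) : ℕ → V → ℕ
  | 0, v => (Fintype.equivFin V v : ℕ)
  | k + 1, v => Fintype.card V * trackAux par k (par v) + (Fintype.equivFin V v : ℕ)

private lemma trackAux_mod {V : Type*} [Fintype V] (par : V → V) (k : ℕ) (v : V) :
    trackAux par k v % Fintype.card V = (Fintype.equivFin V v : ℕ) := by
  cases k with
  | zero => exact Nat.mod_eq_of_lt (Fintype.equivFin V v).isLt
  | succ k =>
    rw [trackAux, Nat.mul_add_mod]
    exact Nat.mod_eq_of_lt (Fintype.equivFin V v).isLt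

/-- Every tree admits a track layout with tracks indexed by `ℕ` in which every edge
has span exactly `1`. -/
theorem tree_track_layout_span_one {V : Type*} [Fintype V]
    (G : SimpleGraph V) (hG : G.IsTree) :
    ∃ (track : V → ℕ) (pos : V → ℕ),
      IsTrackLayout G track pos ∧
      ∀ ⦃u v⦄, G.Adj u v → Nat.dist (track u) (track v) = 1 := by
  classical
  have hc := hG.isConnected
  have hne : Nonempty V := hc.nonempty
  obtain ⟨r⟩ := hne
  -- a parent map
  have hparex : ∀ v, ∃ u, v ≠ r → (G.Adj u v ∧ G.dist r u + 1 = G.dist r v) := by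
    intro v
    by_cases hv : v = r
    · exact ⟨v, fun h => absurd hv h⟩
    · obtain ⟨u, h1, h2⟩ := tree_exists_parent hG r v hv
      exact ⟨u, fun _ => ⟨h1, h2⟩⟩
  choose par hparspec using hparex
  set N := Fintype.card V with hN
  set e : V → ℕ := fun v => (Fintype.equivFin V v : ℕ) with he
  have heN : ∀ v, e v < N := fun v => (Fintype.equivFin V v).isLt
  have heinj : Function.Injective e := fun a b hab => by
    exact (Fintype.equivFin V).injective (Fin.val_injective hab)
  set pos : V → ℕ := fun v => trackAux par (G.dist r v) v with hposdef
  have hmod : ∀ v, pos v % N = e v := fun v => trackAux_mod par _ v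
  -- recurrence for non-root vertices
  have hstep : ∀ v, v ≠ r → pos v = N * pos (par v) + e v := by
    intro v hv
    obtain ⟨hadj, hd⟩ := hparspec v hv
    have hdv : G.dist r v = G.dist r (par v) + 1 := hd.symm
    show trackAux par (G.dist r v) v = N * trackAux par (G.dist r (par v)) (par v) + e v
    rw [hdv, trackAux]
  -- identification of parents
  have hparent_eq : ∀ {u v : V}, G.Adj u v → G.dist r u + 1 = G.dist r v → u = par v := by
    intro u v hadj hd
    have hvr : v ≠ r := by
      intro h
      rw [h, SimpleGraph.dist_self] at hd
      omega
    obtain ⟨hadj', hd'⟩ := hparspec v hvr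
    exact tree_unique_parent hG r hadj hadj' hd hd'
  -- injectivity of pos
  have hposinj : Function.Injective pos := by
    intro a b hab
    apply heinj
    rw [← hmod a, ← hmod b, hab]
  refine ⟨G.dist r, pos, ⟨hposinj, ?_, ?_⟩, ?_⟩
  · intro u v hadj
    rcases tree_adj_dist hG r hadj with h | h <;> omega
  · intro u v x y huv hxy htux htvy hpux hpyv
    rcases tree_adj_dist hG r huv with hcase | hcase
    · -- u is the parent of v, x is the parent of y
      have hcase' : G.dist r x + 1 = G.dist r y := by omega
      have hu : u = par v := hparent_eq huv hcase
      have hx : x = par y := hparent_eq hxy hcase'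
      have hvr : v ≠ r := by
        intro h; rw [h, SimpleGraph.dist_self] at hcase; omega
      have hyr : y ≠ r := by
        intro h; rw [h, SimpleGraph.dist_self] at hcase'; omega
      have hv1 : pos v = N * pos u + e v := by rw [hstep v hvr, ← hu]
      have hy1 : pos y = N * pos x + e y := by rw [hstep y hyr, ← hx]
      have e1 : N * (pos u + 1) ≤ N * pos x := Nat.mul_le_mul_left N hpux
      rw [Nat.mul_succ] at e1
      have := heN v
      omega
    · -- v is the parent of u, y is the parent of x
      have hcase' : G.dist r y + 1 = G.dist r x := by omega
      have hv : v = par u := hparent_eq huv.symm hcase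
      have hy : y = par x := hparent_eq hxy.symm hcase'
      have hur : u ≠ r := by
        intro h; rw [h, SimpleGraph.dist_self] at hcase; omega
      have hxr : x ≠ r := by
        intro h; rw [h, SimpleGraph.dist_self] at hcase'; omega
      have hu1 : pos u = N * pos v + e u := by rw [hstep u hur, ← hv]
      have hx1 : pos x = N * pos y + e x := by rw [hstep x hxr, ← hy]
      have e1 : N * (pos y + 1) ≤ N * pos v := Nat.mul_le_mul_left N hpyv
      rw [Nat.mul_succ] at e1
      have := heN x
      omega
  · intro u v hadj
    rcases tree_adj_dist hG r hadj with h | h <;>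
      simp [Nat.dist] <;> omega
end

section
/- Let G and H be finite simple graphs, and let ℓ ≥ 1. If G has an H-partition that has layered width at most ℓ with respect to some layering of G, then the track number of G is at most 3·ℓ·tn(H). -/
/-!
Take an optimal track layout `(τ, p)` of `H`. Put a vertex `v` of `G` on the track
`(τ (f v), lev v mod 3, g v)`, where `g` numbers the at most `ℓ` vertices of each bag-and-layer
cell, and order `G` lexicographically by `(lev v, p (f v))`. An edge of `G` joins equal or
consecutive layers, so two edges between the same pair of tracks join the same pair of layers;
within a layer the order is the order of the bags in `H`, so an X-crossing in `G` is either an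
X-crossing in `H`, or it puts two adjacent bags on one track of `H`, or it puts one bag strictly
before itself.
-/

open Function Finset

section TrackLayout

variable {V T : Type*} {G : SimpleGraph V}

lemma IsTrackLayout.comp_injective {T' : Type*} {track : V → T} {pos : V → ℕ}
    (h : IsTrackLayout G track pos) {e : T → T'} (he : Injective e) :
    IsTrackLayout G (e ∘ track) pos :=
  ⟨h.1, fun _ _ huv heq => h.2.1 huv (he heq),
    fun _ _ _ _ huv hxy hux hvy => h.2.2 huv hxy (he hux) (he hvy)⟩

lemma isTrackLayout_of_injective {track : V → T} (htrack : Injective track) {pos : V → ℕ}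
    (hpos : Injective pos) : IsTrackLayout G track pos :=
  ⟨hpos, fun _ _ huv heq => huv.ne (htrack heq),
    fun _ _ _ _ _ _ _ hvy _ hyv => (hyv.ne (congrArg pos (htrack hvy)).symm).elim⟩

lemma trackNumber_le_card [Fintype T] {track : V → T} {pos : V → ℕ}
    (h : IsTrackLayout G track pos) : trackNumber G ≤ Fintype.card T :=
  Nat.sInf_le ⟨_, pos, h.comp_injective (Fintype.equivFin T).injective⟩

lemma exists_trackLayout_trackNumber [Finite V] (G : SimpleGraph V) :
    ∃ (track : V → Fin (trackNumber G)) (pos : V → ℕ), IsTrackLayout G track pos := by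
  have hinj : Injective (Finite.equivFin V) := (Finite.equivFin V).injective
  exact Nat.sInf_mem (s := {t | ∃ (track : V → Fin t) (pos : V → ℕ), IsTrackLayout G track pos})
    ⟨_, _, _, isTrackLayout_of_injective hinj (Fin.val_injective.comp hinj)⟩

end TrackLayout

lemma exists_injective_nat_lt_iff {V α : Type*} [Finite V] [LinearOrder α] {k : V → α}
    (hk : Injective k) : ∃ pos : V → ℕ, Injective pos ∧ ∀ a b, pos a < pos b ↔ k a < k b := by
  classical
  have := Fintype.ofFinite V
  have hmono : ∀ a b, k a < k b → #{u | k u < k a} < #{u | k u < k b} := fun a b hab =>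
    Finset.card_lt_card <| (Finset.ssubset_iff_of_subset fun u hu => by
      simp only [Finset.mem_filter] at hu ⊢; exact ⟨hu.1, hu.2.trans hab⟩).2
      ⟨a, by simp [hab]⟩
  refine ⟨fun v => #{u | k u < k v}, fun a b hab => ?_, fun a b => ⟨fun hab => ?_, hmono a b⟩⟩
  · rcases lt_trichotomy (k a) (k b) with h | h | h
    · exact absurd hab (hmono a b h).ne
    · exact hk h
    · exact absurd hab (hmono b a h).ne'
  · refine lt_of_not_ge fun hba => ?_
    rcases hba.lt_or_eq with h | h
    · exact (hmono b a h).not_gt hab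
    · exact hab.ne (by rw [hk h])

lemma exists_injective_prod_fin_of_ncard_fiber_le {V β : Type*} [Finite V] (c : V → β) {ℓ : ℕ}
    (h : ∀ b, {v | c v = b}.ncard ≤ ℓ) : ∃ g : V → Fin ℓ, Injective fun v => (c v, g v) := by
  classical
  have := Fintype.ofFinite V
  have emb : ∀ b, {v | c v = b} ↪ Fin ℓ := fun b =>
    (Function.Embedding.nonempty_of_card_le <| by
      rw [Fintype.card_fin, ← Nat.card_eq_fintype_card, Nat.card_coe_set_eq]
      exact h b).some
  have hg : ∀ b v (hv : c v = b), emb (c v) ⟨v, rfl⟩ = emb b ⟨v, hv⟩ := by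
    rintro _ v rfl; rfl
  refine ⟨fun v => emb (c v) ⟨v, rfl⟩, fun u v huv => ?_⟩
  obtain ⟨hc, hguv⟩ := Prod.mk.inj huv
  dsimp only at hguv
  rw [hg _ u hc, hg _ v rfl] at hguv
  exact congrArg Subtype.val ((emb _).injective hguv)

section LayeredPartition

variable {V W T C : Type*} {G : SimpleGraph V} {H : SimpleGraph W} {τ : W → T} {p : W → ℕ}
  {f : V → W} {lev : V → ℕ} {g : V → C} {pos : V → ℕ}

theorem IsTrackLayout.of_layered_partition (hH : IsTrackLayout H τ p)
    (hpart : ∀ ⦃u v⦄, G.Adj u v → f u = f v ∨ H.Adj (f u) (f v))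
    (hlev : ∀ ⦃u v⦄, G.Adj u v → Nat.dist (lev u) (lev v) ≤ 1)
    (hg : ∀ ⦃u v⦄, f u = f v → lev u = lev v → g u = g v → u = v)
    (hpos_inj : Injective pos)
    (hpos : ∀ ⦃a b⦄, pos a < pos b → toLex (lev a, p (f a)) ≤ toLex (lev b, p (f b))) :
    IsTrackLayout G (fun v => (τ (f v), (lev v : ZMod 3), g v)) pos := by
  refine ⟨hpos_inj, fun u v huv htrack => ?_, fun u v x y huv hxy hux hvy hux_pos hyv_pos => ?_⟩
  · simp only [Prod.mk.injEq, ZMod.natCast_eq_natCast_iff'] at htrack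
    obtain ⟨hτ, hmod, hguv⟩ := htrack
    rcases hpart huv with hf | hadj
    · have hd := hlev huv
      unfold Nat.dist at hd
      exact huv.ne (hg hf (by omega) hguv)
    · exact hH.2.1 hadj hτ
  · simp only [Prod.mk.injEq, ZMod.natCast_eq_natCast_iff'] at hux hvy
    obtain ⟨hτux, hmux, hgux⟩ := hux
    obtain ⟨hτvy, hmvy, hgvy⟩ := hvy
    have hux_le := hpos hux_pos
    have hyv_le := hpos hyv_pos
    rw [Prod.Lex.toLex_le_toLex] at hux_le hyv_le
    have hd1 := hlev huv
    have hd2 := hlev hxy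
    unfold Nat.dist at hd1 hd2
    simp only at hux_le hyv_le
    have hlux : lev u = lev x := by omega
    have hlvy : lev y = lev v := by omega
    have hpux : p (f u) < p (f x) := lt_of_le_of_ne (by omega) fun h =>
      hux_pos.ne (congrArg pos (hg (hH.1 h) hlux hgux))
    have hpyv : p (f y) < p (f v) := lt_of_le_of_ne (by omega) fun h =>
      hyv_pos.ne (congrArg pos (hg (hH.1 h) hlvy hgvy.symm))
    rcases hpart huv with huv' | huv' <;> rcases hpart hxy with hxy' | hxy'
    · rw [huv', hxy'] at hpux
      omega
    · exact hH.2.1 hxy' (by rw [← hτux, huv', hτvy])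
    · exact hH.2.1 huv' (by rw [hτux, hxy', hτvy])
    · exact hH.2.2 huv' hxy' hτux hτvy hpux hpyv

end LayeredPartition

theorem trackNumber_le_of_H_partition_general {V : Type*} {W : Type*} [Fintype V] [Fintype W]
    (G : SimpleGraph V) (H : SimpleGraph W) (ℓ : ℕ)
    (f : V → W) (hpart : ∀ ⦃u v⦄, G.Adj u v → f u = f v ∨ H.Adj (f u) (f v))
    (lev : V → ℕ) (hlev : ∀ ⦃u v⦄, G.Adj u v → Nat.dist (lev u) (lev v) ≤ 1)
    (hwidth : ∀ (x : W) (i : ℕ), Set.ncard {v : V | f v = x ∧ lev v = i} ≤ ℓ) :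
    trackNumber G ≤ 3 * ℓ * trackNumber H := by
  obtain ⟨τ, p, hH⟩ := exists_trackLayout_trackNumber H
  obtain ⟨g, hg⟩ := exists_injective_prod_fin_of_ncard_fiber_le (fun v => (f v, lev v))
    fun b => by simpa only [Prod.ext_iff] using hwidth b.1 b.2
  have hcell : ∀ ⦃u v⦄, f u = f v → lev u = lev v → g u = g v → u = v :=
    fun u v hf hl hguv => hg (by simp [hf, hl, hguv])
  have hkey : Injective fun v => toLex (lev v, toLex (p (f v), g v)) := fun u v huv => by
    simp only [toLex_inj, Prod.mk.injEq] at huv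
    exact hcell (hH.1 huv.2.1) huv.1 huv.2.2
  obtain ⟨pos, hpos_inj, hpos⟩ := exists_injective_nat_lt_iff hkey
  have hG := IsTrackLayout.of_layered_partition hH hpart hlev hcell hpos_inj fun a b hab => by
    have := (hpos a b).1 hab
    simp only [Prod.Lex.toLex_lt_toLex, Prod.Lex.toLex_le_toLex] at this ⊢
    omega
  calc trackNumber G ≤ Fintype.card (Fin (trackNumber H) × ZMod 3 × Fin ℓ) :=
        trackNumber_le_card hG
    _ = 3 * ℓ * trackNumber H := by simp only [Fintype.card_prod, Fintype.card_fin, ZMod.card]; ring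

/-- If `G` has an `H`-partition of layered width at most `ℓ ≥ 1` with respect to some
layering of `G`, then the track number of `G` is at most `3ℓ·tn(H)`. -/
theorem trackNumber_le_of_H_partition {V : Type*} {W : Type*} [Fintype V] [Fintype W]
    (G : SimpleGraph V) (H : SimpleGraph W) (ℓ : ℕ) (hℓ : 1 ≤ ℓ)
    (f : V → W) (hpart : ∀ ⦃u v⦄, G.Adj u v → f u = f v ∨ H.Adj (f u) (f v))
    (lev : V → ℕ) (hlev : ∀ ⦃u v⦄, G.Adj u v → Nat.dist (lev u) (lev v) ≤ 1)
    (hwidth : ∀ (x : W) (i : ℕ), Set.ncard {v : V | f v = x ∧ lev v = i} ≤ ℓ) :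
    trackNumber G ≤ 3 * ℓ * trackNumber H :=
  trackNumber_le_of_H_partition_general G H ℓ f hpart lev hlev hwidth
end

section
/- Let a track layout of a graph G be given, and let a, b, c, d be vertices of G with edges (a,b), (a,c), (d,b), (d,c) in G such that track b = track c and pos b < pos c. Then for every vertex v with track v = track b and pos b < pos v < pos c, and every neighbor u of v with u ≠ a and u ≠ d, one has track u ≠ track a and track u ≠ track d (the Q-configuration lemma). -/
/-- The Q-configuration lemma: if `a, b, c, d` form a quadrangle with `b, c` on a
common track and a vertex `v` lies between `b` and `c` on that track, then no
neighbor of `v` (other than `a` and `d`) lies on the track of `a` or of `d`. -/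
theorem q_configuration {V : Type*} {T : Type*} (G : SimpleGraph V)
    (track : V → T) (pos : V → ℕ) (h : IsTrackLayout G track pos)
    (a b c d : V) (hab : G.Adj a b) (hac : G.Adj a c)
    (hdb : G.Adj d b) (hdc : G.Adj d c)
    (hbc : track b = track c) (hposbc : pos b < pos c)
    (v : V) (hv : track v = track b) (hbv : pos b < pos v) (hvc : pos v < pos c)
    (u : V) (huv : G.Adj v u) (hua : u ≠ a) (hud : u ≠ d) :
    track u ≠ track a ∧ track u ≠ track d := by
  obtain ⟨hinj, hdist, hX⟩ := h
  have key : ∀ w : V, G.Adj w b → G.Adj w c → u ≠ w → track u ≠ track w := by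
    intro w hwb hwc huw htw
    rcases lt_or_gt_of_ne (fun hp => huw (hinj hp)) with hlt | hgt
    · exact hX huv.symm hwb htw (hv) hlt hbv
    · exact hX hwc huv.symm htw.symm (hbc.symm.trans hv.symm) hgt hvc
  exact ⟨key a hab hac hua, key d hdb hdc hud⟩
end

section
/- Let a track layout of a graph G be given, and let a, b, c, d, u, v be vertices of G with u ≠ v, track a = track b and pos a < pos b, track c = track d and pos c < pos d, and edges (u,a), (u,d), (v,b), (v,c) in G. Then track u ≠ track v (the W-configuration lemma). -/
/-- The W-configuration lemma: if `a < b` on a common track, `c < d` on a common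
track, and `u, v` are distinct vertices with edges `(u,a)`, `(u,d)`, `(v,b)`, `(v,c)`,
then `u` and `v` lie on distinct tracks. -/
theorem w_configuration {V : Type*} {T : Type*} (G : SimpleGraph V)
    (track : V → T) (pos : V → ℕ) (h : IsTrackLayout G track pos)
    (a b c d u v : V) (huv : u ≠ v)
    (hab : track a = track b) (hposab : pos a < pos b)
    (hcd : track c = track d) (hposcd : pos c < pos d)
    (hua : G.Adj u a) (hud : G.Adj u d) (hvb : G.Adj v b) (hvc : G.Adj v c) :
    track u ≠ track v := by
  intro htuv
  obtain ⟨hinj, -, hX⟩ := h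
  rcases lt_or_gt_of_ne (fun hp => huv (hinj hp)) with hlt | hgt
  · exact hX hud hvc htuv hcd.symm hlt hposcd
  · exact hX hvb hua htuv.symm hab.symm hgt hposab
end

section
/- For every d ≥ 0, the X-tree XT_d admits a track layout with tracks indexed by ℕ in which every level edge has span exactly 1 and every tree edge has span at most 2. -/
namespace XTP

/-- Track function. -/
def tr : ℕ → ℕ → ℕ
  | 0, _ => 0
  | (k+1), m => tr k (m/2) + 1 + (m/2 + m) % 2

lemma tr_succ (k m : ℕ) : tr (k+1) m = tr k (m/2) + 1 + (m/2 + m) % 2 := rfl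

lemma tr_child (k j c : ℕ) (hc : c ≤ 1) :
    tr (k+1) (2*j+c) = tr k j + 1 + (j+c) % 2 := by
  have h1 : (2*j+c)/2 = j := by omega
  rw [tr_succ, h1]
  have : (j + (2*j+c)) % 2 = (j+c) % 2 := by omega
  omega

lemma tr_child0 (k j : ℕ) : tr (k+1) (2*j) = tr k j + 1 + j % 2 := by
  have := tr_child k j 0 (by omega); simpa using this

lemma tr_child1 (k j : ℕ) : tr (k+1) (2*j+1) = tr k j + 1 + (j+1) % 2 :=
  tr_child k j 1 (by omega)

lemma tr_lt_child (k m : ℕ) : tr k (m/2) < tr (k+1) m := by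
  rw [tr_succ]; omega

lemma tr_level (k j : ℕ) (hj : j + 1 < 2^k) :
    tr k (j+1) = tr k j + 1 ∨ tr k j = tr k (j+1) + 1 := by
  induction k generalizing j with
  | zero => simp at hj
  | succ k ih =>
    rcases Nat.even_or_odd j with ⟨i, hi⟩ | ⟨i, hi⟩
    · have h0 : j = 2*i := by omega
      have e1 := tr_child0 k i
      have e2 := tr_child1 k i
      rw [h0]
      omega
    · have h0 : j = 2*i+1 := by omega
      have e1 := tr_child1 k i
      have e2 := tr_child0 k (i+1)
      have hih := ih i (by
        have : (2:ℕ)^(k+1) = 2*2^k := by ring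
        omega)
      rw [h0, show 2*i+1+1 = 2*(i+1) from by omega]
      omega

lemma tr_desc (n k j i : ℕ) (h1 : j * 2^(n+1) ≤ i) (h2 : i < (j+1) * 2^(n+1)) :
    tr k j + (n+1) ≤ tr (k+(n+1)) i := by
  induction n generalizing i with
  | zero =>
    rw [show k + (0+1) = k + 1 from by omega]
    have : i = 2*j ∨ i = 2*j+1 := by
      have e : (2:ℕ)^(0+1) = 2 := by norm_num
      rw [e] at h1 h2; omega
    rcases this with rfl | rfl
    · have := tr_child0 k j; omega
    · have := tr_child1 k j; omega
  | succ n ih =>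
    have hd1 : j * 2^(n+1) ≤ i / 2 := by
      rw [Nat.le_div_iff_mul_le (by norm_num)]
      calc j * 2^(n+1) * 2 = j * 2^(n+1+1) := by ring
        _ ≤ i := h1
    have hd2 : i / 2 < (j+1) * 2^(n+1) := by
      rw [Nat.div_lt_iff_lt_mul (by norm_num)]
      calc i < (j+1) * 2^(n+1+1) := h2
        _ = (j+1) * 2^(n+1) * 2 := by ring
    have hih := ih (i/2) hd1 hd2
    have e : tr (k + (n+1+1)) i = tr (k+(n+1)) (i/2) + 1 + ((i/2 + i) % 2) := by
      rw [show k + (n+1+1) = (k + (n+1)) + 1 from by omega, tr_succ]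
    omega

lemma desc_t2 (k l j i : ℕ) (hkl : k < l)
    (h1 : 8*j*2^(l-k) ≤ 8*i+4) (h2 : 8*i+4 ≤ (8*j+8)*2^(l-k)) :
    tr k j < tr l i := by
  obtain ⟨n, hn⟩ : ∃ n, l - k = n + 1 := ⟨l - k - 1, by omega⟩
  have hX : j * 2^(n+1) ≤ i := by
    have h : 8*(j*2^(n+1)) ≤ 8*i+4 := by
      calc 8*(j*2^(n+1)) = 8*j*2^(l-k) := by rw [hn]; ring
        _ ≤ 8*i+4 := h1
    omega
  have hY : i < (j+1) * 2^(n+1) := by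
    have h : 8*i+4 ≤ 8*((j+1)*2^(n+1)) := by
      calc 8*i+4 ≤ (8*j+8)*2^(l-k) := h2
        _ = 8*((j+1)*2^(n+1)) := by rw [hn]; ring
    omega
  have := tr_desc n k j i hX hY
  rw [show l = k + (n+1) from by omega]
  omega

lemma pow_inj_odd (a b j i : ℕ) (h : (2*j+1)*2^a = (2*i+1)*2^b) : a = b ∧ j = i := by
  induction a generalizing b j i with
  | zero =>
    cases b with
    | zero => simp at h; omega
    | succ b =>
      simp only [pow_zero, mul_one, pow_succ, ← mul_assoc] at h
      have : ∃ m, (2*i+1)*2^b*2 = 2*m := ⟨(2*i+1)*2^b, by ring⟩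
      omega
  | succ a ih =>
    cases b with
    | zero =>
      simp only [pow_zero, mul_one, pow_succ, ← mul_assoc] at h
      have : ∃ m, (2*j+1)*2^a*2 = 2*m := ⟨(2*j+1)*2^a, by ring⟩
      omega
    | succ b =>
      rw [pow_succ, pow_succ, ← mul_assoc, ← mul_assoc] at h
      have h' := Nat.eq_of_mul_eq_mul_right (by norm_num : 0 < 2) h
      have := ih b j i h'
      omega

/-- Position function. -/
def Pv (d k j : ℕ) : ℕ := (2*j+1)*2^(d+1-k)

lemma Pv_split (d k j u v : ℕ) (h : d + 1 - k = u + v) :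
    Pv d k j = ((2*j+1) * 2^u) * 2^v := by
  rw [Pv, h, pow_add, mul_assoc]

lemma cancelF {a b F : ℕ} (hF : 0 < F) (h : a * F ≤ b * F) : a ≤ b := by
  by_contra hc
  push_neg at hc
  have h2 := mul_le_mul_left (by omega : b+1 ≤ a) F
  have e : (b+1)*F = b*F + F := by ring
  linarith

lemma two_le_pow {n : ℕ} (h : 1 ≤ n) : 2 ≤ 2^n := by
  calc (2:ℕ) = 2^1 := (pow_one 2).symm
    _ ≤ 2^n := Nat.pow_le_pow_right (by norm_num) h

lemma one_le_pow (n : ℕ) : 1 ≤ 2^n := Nat.one_le_two_pow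

lemma core_ll (d K A K' A' : ℕ) (hK'd : K' ≤ d) (hKK : K ≤ K')
    (e1 : ¬(K = K' ∧ A = A')) (e2 : ¬(K = K' ∧ A = A'+1)) (e3 : ¬(K = K' ∧ A+1 = A'))
    (hmin : min (tr K A) (tr K (A+1)) = min (tr K' A') (tr K' (A'+1)))
    (i1 : min (Pv d K A) (Pv d K (A+1)) ≤ max (Pv d K' A') (Pv d K' (A'+1)))
    (i2 : min (Pv d K' A') (Pv d K' (A'+1)) ≤ max (Pv d K A) (Pv d K (A+1))) : False := by
  rcases Nat.eq_or_lt_of_le hKK with hE | hLT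
  · subst hE
    have Fpos : (0:ℕ) < 2^(d-K) := pow_pos (by norm_num) _
    have pA : Pv d K A = (4*A+2) * 2^(d-K) := by
      rw [Pv_split d K A 1 (d-K) (by omega)]; ring_nf
    have pB : Pv d K (A+1) = (4*A+6) * 2^(d-K) := by
      rw [Pv_split d K (A+1) 1 (d-K) (by omega)]; ring_nf
    have pA' : Pv d K A' = (4*A'+2) * 2^(d-K) := by
      rw [Pv_split d K A' 1 (d-K) (by omega)]; ring_nf
    have pB' : Pv d K (A'+1) = (4*A'+6) * 2^(d-K) := by
      rw [Pv_split d K (A'+1) 1 (d-K) (by omega)]; ring_nf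
    have c1 : 4*A+2 ≤ 4*A'+6 := by
      apply cancelF Fpos
      calc (4*A+2) * 2^(d-K) ≤ min (Pv d K A) (Pv d K (A+1)) := by
            refine le_min (le_of_eq pA.symm) ?_
            rw [pB]; exact mul_le_mul_left (by omega) _
        _ ≤ max (Pv d K A') (Pv d K (A'+1)) := i1
        _ ≤ (4*A'+6) * 2^(d-K) := by
            refine max_le ?_ (le_of_eq pB')
            rw [pA']; exact mul_le_mul_left (by omega) _
    have c2 : 4*A'+2 ≤ 4*A+6 := by
      apply cancelF Fpos
      calc (4*A'+2) * 2^(d-K) ≤ min (Pv d K A') (Pv d K (A'+1)) := by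
            refine le_min (le_of_eq pA'.symm) ?_
            rw [pB']; exact mul_le_mul_left (by omega) _
        _ ≤ max (Pv d K A) (Pv d K (A+1)) := i2
        _ ≤ (4*A+6) * 2^(d-K) := by
            refine max_le ?_ (le_of_eq pB)
            rw [pA]; exact mul_le_mul_left (by omega) _
    have d1 : ¬(A = A') := fun h => e1 ⟨rfl, h⟩
    have d2 : ¬(A = A'+1) := fun h => e2 ⟨rfl, h⟩
    have d3 : ¬(A+1 = A') := fun h => e3 ⟨rfl, h⟩
    omega
  · have Fpos : (0:ℕ) < 2^(d-K') := pow_pos (by norm_num) _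
    have hN : 2 ≤ 2^(K'-K) := two_le_pow (by omega)
    have pA : Pv d K A = ((4*A+2)*2^(K'-K)) * 2^(d-K') := by
      rw [Pv_split d K A (K'-K+1) (d-K') (by omega)]
      congr 1
      rw [pow_succ]; ring
    have pB : Pv d K (A+1) = ((4*A+6)*2^(K'-K)) * 2^(d-K') := by
      rw [Pv_split d K (A+1) (K'-K+1) (d-K') (by omega)]
      congr 1
      rw [pow_succ]; ring
    have pA' : Pv d K' A' = (4*A'+2) * 2^(d-K') := by
      rw [Pv_split d K' A' 1 (d-K') (by omega)]; ring_nf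
    have pB' : Pv d K' (A'+1) = (4*A'+6) * 2^(d-K') := by
      rw [Pv_split d K' (A'+1) 1 (d-K') (by omega)]; ring_nf
    have c1 : (4*A+2)*2^(K'-K) ≤ 4*A'+6 := by
      apply cancelF Fpos
      calc ((4*A+2)*2^(K'-K)) * 2^(d-K') ≤ min (Pv d K A) (Pv d K (A+1)) := by
            refine le_min (le_of_eq pA.symm) ?_
            rw [pB]
            exact mul_le_mul_left (mul_le_mul_left (by omega) _) _
        _ ≤ max (Pv d K' A') (Pv d K' (A'+1)) := i1
        _ ≤ (4*A'+6) * 2^(d-K') := by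
            refine max_le ?_ (le_of_eq pB')
            rw [pA']; exact mul_le_mul_left (by omega) _
    have c2 : 4*A'+2 ≤ (4*A+6)*2^(K'-K) := by
      apply cancelF Fpos
      calc (4*A'+2) * 2^(d-K') ≤ min (Pv d K' A') (Pv d K' (A'+1)) := by
            refine le_min (le_of_eq pA'.symm) ?_
            rw [pB']; exact mul_le_mul_left (by omega) _
        _ ≤ max (Pv d K A) (Pv d K (A+1)) := i2
        _ ≤ ((4*A+6)*2^(K'-K)) * 2^(d-K') := by
            refine max_le ?_ (le_of_eq pB)
            rw [pA]
            exact mul_le_mul_left (mul_le_mul_left (by omega) _) _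
    have key : ∀ i, 8*A*2^(K'-K) ≤ 8*i+4 → 8*i+4 ≤ (8*A+16)*2^(K'-K) →
        min (tr K A) (tr K (A+1)) < tr K' i := by
      intro i hi1 hi2
      rcases le_total (8*i+4) ((8*A+8)*2^(K'-K)) with h | h
      · exact lt_of_le_of_lt (min_le_left _ _) (desc_t2 K K' A i hLT hi1 h)
      · refine lt_of_le_of_lt (min_le_right _ _) (desc_t2 K K' (A+1) i hLT ?_ ?_)
        · rw [show 8*(A+1) = 8*A+8 from by ring]; exact h
        · rw [show 8*(A+1)+8 = 8*A+16 from by ring]; exact hi2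
    have m1 : min (tr K A) (tr K (A+1)) < tr K' A' := by
      apply key A' (by linarith) (by linarith)
    have m2 : min (tr K A) (tr K (A+1)) < tr K' (A'+1) := by
      apply key (A'+1) (by linarith) (by linarith)
    have hf := lt_min m1 m2
    rw [← hmin] at hf
    exact lt_irrefl _ hf


/-- edge1 is level edge at level K ((K,A)-(K,A+1)); edge2 is tree edge
((K',A')-(K'+1,B')). -/
lemma core_lt (d K A K' A' B' : ℕ) (hK'd : K'+1 ≤ d) (hKK : K ≤ K')
    (hB' : B' = 2*A' ∨ B' = 2*A'+1)
    (e1 : ¬(K = K' ∧ A = A')) (e3 : ¬(K = K' ∧ A+1 = A'))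
    (hmin : min (tr K A) (tr K (A+1)) = min (tr K' A') (tr (K'+1) B'))
    (i1 : min (Pv d K A) (Pv d K (A+1)) ≤ max (Pv d K' A') (Pv d (K'+1) B'))
    (i2 : min (Pv d K' A') (Pv d (K'+1) B') ≤ max (Pv d K A) (Pv d K (A+1)) ) : False := by
  have hBb : 2*A' ≤ B' ∧ B' ≤ 2*A'+1 := by rcases hB' with h|h <;> omega
  rcases Nat.eq_or_lt_of_le hKK with hE | hLT
  · subst hE
    have Fpos : (0:ℕ) < 2^(d-K-1) := pow_pos (by norm_num) _
    have pA : Pv d K A = (8*A+4) * 2^(d-K-1) := by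
      rw [Pv_split d K A 2 (d-K-1) (by omega)]; ring_nf
    have pB : Pv d K (A+1) = (8*A+12) * 2^(d-K-1) := by
      rw [Pv_split d K (A+1) 2 (d-K-1) (by omega)]; ring_nf
    have pA' : Pv d K A' = (8*A'+4) * 2^(d-K-1) := by
      rw [Pv_split d K A' 2 (d-K-1) (by omega)]; ring_nf
    have pB' : Pv d (K+1) B' = (4*B'+2) * 2^(d-K-1) := by
      rw [Pv_split d (K+1) B' 1 (d-K-1) (by omega)]; ring_nf
    have c1 : 8*A+4 ≤ 8*A'+6 := by
      apply cancelF Fpos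
      calc (8*A+4) * 2^(d-K-1) ≤ min (Pv d K A) (Pv d K (A+1)) := by
            refine le_min (le_of_eq pA.symm) ?_
            rw [pB]; exact mul_le_mul_left (by omega) _
        _ ≤ max (Pv d K A') (Pv d (K+1) B') := i1
        _ ≤ (8*A'+6) * 2^(d-K-1) := by
            refine max_le ?_ ?_
            · rw [pA']; exact mul_le_mul_left (by omega) _
            · rw [pB']; exact mul_le_mul_left (by omega) _
    have c2 : 8*A'+2 ≤ 8*A+12 := by
      apply cancelF Fpos
      calc (8*A'+2) * 2^(d-K-1) ≤ min (Pv d K A') (Pv d (K+1) B') := by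
            refine le_min ?_ ?_
            · rw [pA']; exact mul_le_mul_left (by omega) _
            · rw [pB']; exact mul_le_mul_left (by omega) _
        _ ≤ max (Pv d K A) (Pv d K (A+1)) := i2
        _ ≤ (8*A+12) * 2^(d-K-1) := by
            refine max_le ?_ (le_of_eq pB)
            rw [pA]; exact mul_le_mul_left (by omega) _
    have d1 : ¬(A = A') := fun h => e1 ⟨rfl, h⟩
    have d3 : ¬(A+1 = A') := fun h => e3 ⟨rfl, h⟩
    omega
  · have Fpos : (0:ℕ) < 2^(d-K'-1) := pow_pos (by norm_num) _
    have hN : 2 ≤ 2^(K'-K) := two_le_pow (by omega)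
    have pA : Pv d K A = ((8*A+4)*2^(K'-K)) * 2^(d-K'-1) := by
      rw [Pv_split d K A (K'-K+2) (d-K'-1) (by omega)]
      congr 1
      rw [show K'-K+2 = (K'-K)+2 from rfl, pow_add]; ring
    have pB : Pv d K (A+1) = ((8*A+12)*2^(K'-K)) * 2^(d-K'-1) := by
      rw [Pv_split d K (A+1) (K'-K+2) (d-K'-1) (by omega)]
      congr 1
      rw [show K'-K+2 = (K'-K)+2 from rfl, pow_add]; ring
    have pA' : Pv d K' A' = (8*A'+4) * 2^(d-K'-1) := by
      rw [Pv_split d K' A' 2 (d-K'-1) (by omega)]; ring_nf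
    have pB' : Pv d (K'+1) B' = (4*B'+2) * 2^(d-K'-1) := by
      rw [Pv_split d (K'+1) B' 1 (d-K'-1) (by omega)]; ring_nf
    have c1 : (8*A+4)*2^(K'-K) ≤ 8*A'+6 := by
      apply cancelF Fpos
      calc ((8*A+4)*2^(K'-K)) * 2^(d-K'-1) ≤ min (Pv d K A) (Pv d K (A+1)) := by
            refine le_min (le_of_eq pA.symm) ?_
            rw [pB]
            exact mul_le_mul_left (mul_le_mul_left (by omega) _) _
        _ ≤ max (Pv d K' A') (Pv d (K'+1) B') := i1
        _ ≤ (8*A'+6) * 2^(d-K'-1) := by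
            refine max_le ?_ ?_
            · rw [pA']; exact mul_le_mul_left (by omega) _
            · rw [pB']; exact mul_le_mul_left (by omega) _
    have c2 : 8*A'+2 ≤ (8*A+12)*2^(K'-K) := by
      apply cancelF Fpos
      calc (8*A'+2) * 2^(d-K'-1) ≤ min (Pv d K' A') (Pv d (K'+1) B') := by
            refine le_min ?_ ?_
            · rw [pA']; exact mul_le_mul_left (by omega) _
            · rw [pB']; exact mul_le_mul_left (by omega) _
        _ ≤ max (Pv d K A) (Pv d K (A+1)) := i2
        _ ≤ ((8*A+12)*2^(K'-K)) * 2^(d-K'-1) := by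
            refine max_le ?_ (le_of_eq pB)
            rw [pA]
            exact mul_le_mul_left (mul_le_mul_left (by omega) _) _
    have hpow2 : (2:ℕ)^(K'+1-K) = 2^(K'-K) * 2 := by
      rw [← pow_succ]; congr 1; omega
    have m1 : min (tr K A) (tr K (A+1)) < tr K' A' := by
      rcases le_total (8*A'+4) ((8*A+8)*2^(K'-K)) with h | h
      · refine lt_of_le_of_lt (min_le_left _ _) (desc_t2 K K' A A' hLT ?_ h)
        linarith
      · refine lt_of_le_of_lt (min_le_right _ _) (desc_t2 K K' (A+1) A' hLT ?_ ?_)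
        · rw [show 8*(A+1) = 8*A+8 from by ring]; exact h
        · rw [show 8*(A+1)+8 = 8*A+16 from by ring]; linarith
    have m2 : min (tr K A) (tr K (A+1)) < tr (K'+1) B' := by
      rcases le_total (8*B'+4) ((16*A+16)*2^(K'-K)) with h | h
      · refine lt_of_le_of_lt (min_le_left _ _) (desc_t2 K (K'+1) A B' (by omega) ?_ ?_)
        · rw [hpow2]; linarith [hBb.1]
        · rw [hpow2]; linarith
      · refine lt_of_le_of_lt (min_le_right _ _) (desc_t2 K (K'+1) (A+1) B' (by omega) ?_ ?_)
        · rw [hpow2]; linarith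
        · rw [hpow2]; linarith [hBb.2]
    have hf := lt_min m1 m2
    rw [← hmin] at hf
    exact lt_irrefl _ hf


/-- edge1 is tree edge ((K,A)-(K+1,B)); edge2 is level edge ((K',A')-(K',A'+1)). -/
lemma core_tl (d K A B K' A' : ℕ) (hKd : K+1 ≤ d) (hK'd : K' ≤ d) (hKK : K ≤ K')
    (hB : B = 2*A ∨ B = 2*A+1)
    (e1 : ¬(K = K' ∧ A = A')) (e2 : ¬(K = K' ∧ A = A'+1))
    (e3 : ¬(K+1 = K' ∧ B = A')) (e4 : ¬(K+1 = K' ∧ B = A'+1))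
    (hmin : min (tr K A) (tr (K+1) B) = min (tr K' A') (tr K' (A'+1)))
    (i1 : min (Pv d K A) (Pv d (K+1) B) ≤ max (Pv d K' A') (Pv d K' (A'+1)))
    (i2 : min (Pv d K' A') (Pv d K' (A'+1)) ≤ max (Pv d K A) (Pv d (K+1) B)) : False := by
  have hBb : 2*A ≤ B ∧ B ≤ 2*A+1 := by rcases hB with h|h <;> omega
  have hch : tr K A < tr (K+1) B := by
    have := tr_lt_child K B
    rwa [show B/2 = A from by omega] at this
  rcases Nat.eq_or_lt_of_le hKK with hE | hLT
  · subst hE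
    have Fpos : (0:ℕ) < 2^(d-K-1) := pow_pos (by norm_num) _
    have pA : Pv d K A = (8*A+4) * 2^(d-K-1) := by
      rw [Pv_split d K A 2 (d-K-1) (by omega)]; ring_nf
    have pB : Pv d (K+1) B = (4*B+2) * 2^(d-K-1) := by
      rw [Pv_split d (K+1) B 1 (d-K-1) (by omega)]; ring_nf
    have pA' : Pv d K A' = (8*A'+4) * 2^(d-K-1) := by
      rw [Pv_split d K A' 2 (d-K-1) (by omega)]; ring_nf
    have pB' : Pv d K (A'+1) = (8*A'+12) * 2^(d-K-1) := by
      rw [Pv_split d K (A'+1) 2 (d-K-1) (by omega)]; ring_nf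
    have c1 : 8*A+2 ≤ 8*A'+12 := by
      apply cancelF Fpos
      calc (8*A+2) * 2^(d-K-1) ≤ min (Pv d K A) (Pv d (K+1) B) := by
            refine le_min ?_ ?_
            · rw [pA]; exact mul_le_mul_left (by omega) _
            · rw [pB]; exact mul_le_mul_left (by omega) _
        _ ≤ max (Pv d K A') (Pv d K (A'+1)) := i1
        _ ≤ (8*A'+12) * 2^(d-K-1) := by
            refine max_le ?_ (le_of_eq pB')
            rw [pA']; exact mul_le_mul_left (by omega) _
    have c2 : 8*A'+4 ≤ 8*A+6 := by
      apply cancelF Fpos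
      calc (8*A'+4) * 2^(d-K-1) ≤ min (Pv d K A') (Pv d K (A'+1)) := by
            refine le_min (le_of_eq pA'.symm) ?_
            rw [pB']; exact mul_le_mul_left (by omega) _
        _ ≤ max (Pv d K A) (Pv d (K+1) B) := i2
        _ ≤ (8*A+6) * 2^(d-K-1) := by
            refine max_le ?_ ?_
            · rw [pA]; exact mul_le_mul_left (by omega) _
            · rw [pB]; exact mul_le_mul_left (by omega) _
    have d1 : ¬(A = A') := fun h => e1 ⟨rfl, h⟩
    have d2 : ¬(A = A'+1) := fun h => e2 ⟨rfl, h⟩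
    omega
  · rcases Nat.eq_or_lt_of_le (show K+1 ≤ K' from hLT) with hE2 | hLT2
    · -- K' = K + 1 : every intersecting configuration shares a vertex
      subst hE2
      have Fpos : (0:ℕ) < 2^(d-K-1) := pow_pos (by norm_num) _
      have pA : Pv d K A = (8*A+4) * 2^(d-K-1) := by
        rw [Pv_split d K A 2 (d-K-1) (by omega)]; ring_nf
      have pA' : Pv d (K+1) A' = (4*A'+2) * 2^(d-K-1) := by
        rw [Pv_split d (K+1) A' 1 (d-K-1) (by omega)]; ring_nf
      have pB' : Pv d (K+1) (A'+1) = (4*A'+6) * 2^(d-K-1) := by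
        rw [Pv_split d (K+1) (A'+1) 1 (d-K-1) (by omega)]; ring_nf
      rcases hB with hB0 | hB0 <;> subst hB0
      · -- B = 2A
        have pB : Pv d (K+1) (2*A) = (8*A+2) * 2^(d-K-1) := by
          rw [Pv_split d (K+1) (2*A) 1 (d-K-1) (by omega)]; ring_nf
        have c1 : 8*A+2 ≤ 4*A'+6 := by
          apply cancelF Fpos
          calc (8*A+2) * 2^(d-K-1) ≤ min (Pv d K A) (Pv d (K+1) (2*A)) := by
                refine le_min ?_ (le_of_eq pB.symm)
                rw [pA]; exact mul_le_mul_left (by omega) _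
            _ ≤ max (Pv d (K+1) A') (Pv d (K+1) (A'+1)) := i1
            _ ≤ (4*A'+6) * 2^(d-K-1) := by
                refine max_le ?_ (le_of_eq pB')
                rw [pA']; exact mul_le_mul_left (by omega) _
        have c2 : 4*A'+2 ≤ 8*A+4 := by
          apply cancelF Fpos
          calc (4*A'+2) * 2^(d-K-1) ≤ min (Pv d (K+1) A') (Pv d (K+1) (A'+1)) := by
                refine le_min (le_of_eq pA'.symm) ?_
                rw [pB']; exact mul_le_mul_left (by omega) _
            _ ≤ max (Pv d K A) (Pv d (K+1) (2*A)) := i2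
            _ ≤ (8*A+4) * 2^(d-K-1) := by
                refine max_le (le_of_eq pA) ?_
                rw [pB]; exact mul_le_mul_left (by omega) _
        rcases (show 2*A = A' ∨ 2*A = A'+1 from by omega) with h | h
        · exact e3 ⟨rfl, h⟩
        · exact e4 ⟨rfl, h⟩
      · -- B = 2A+1
        have pB : Pv d (K+1) (2*A+1) = (8*A+6) * 2^(d-K-1) := by
          rw [Pv_split d (K+1) (2*A+1) 1 (d-K-1) (by omega)]; ring_nf
        have c1 : 8*A+4 ≤ 4*A'+6 := by
          apply cancelF Fpos
          calc (8*A+4) * 2^(d-K-1) ≤ min (Pv d K A) (Pv d (K+1) (2*A+1)) := by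
                refine le_min (le_of_eq pA.symm) ?_
                rw [pB]; exact mul_le_mul_left (by omega) _
            _ ≤ max (Pv d (K+1) A') (Pv d (K+1) (A'+1)) := i1
            _ ≤ (4*A'+6) * 2^(d-K-1) := by
                refine max_le ?_ (le_of_eq pB')
                rw [pA']; exact mul_le_mul_left (by omega) _
        have c2 : 4*A'+2 ≤ 8*A+6 := by
          apply cancelF Fpos
          calc (4*A'+2) * 2^(d-K-1) ≤ min (Pv d (K+1) A') (Pv d (K+1) (A'+1)) := by
                refine le_min (le_of_eq pA'.symm) ?_
                rw [pB']; exact mul_le_mul_left (by omega) _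
            _ ≤ max (Pv d K A) (Pv d (K+1) (2*A+1)) := i2
            _ ≤ (8*A+6) * 2^(d-K-1) := by
                refine max_le ?_ (le_of_eq pB)
                rw [pA]; exact mul_le_mul_left (by omega) _
        rcases (show 2*A+1 = A' ∨ 2*A+1 = A'+1 from by omega) with h | h
        · exact e3 ⟨rfl, h⟩
        · exact e4 ⟨rfl, h⟩
    · -- K + 1 < K'
      have Fpos : (0:ℕ) < 2^(d-K') := pow_pos (by norm_num) _
      have hM : 2 ≤ 2^(K'-K-1) := two_le_pow (by omega)
      have pA : Pv d K A = ((8*A+4)*2^(K'-K-1)) * 2^(d-K') := by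
        rw [Pv_split d K A ((K'-K-1)+2) (d-K') (by omega), pow_add]
        congr 1; ring
      have pB : Pv d (K+1) B = ((4*B+2)*2^(K'-K-1)) * 2^(d-K') := by
        rw [Pv_split d (K+1) B ((K'-K-1)+1) (d-K') (by omega), pow_add]
        congr 1; ring
      have pA' : Pv d K' A' = (4*A'+2) * 2^(d-K') := by
        rw [Pv_split d K' A' 1 (d-K') (by omega)]; ring_nf
      have pB' : Pv d K' (A'+1) = (4*A'+6) * 2^(d-K') := by
        rw [Pv_split d K' (A'+1) 1 (d-K') (by omega)]; ring_nf
      have c1 : (8*A+2)*2^(K'-K-1) ≤ 4*A'+6 := by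
        apply cancelF Fpos
        calc ((8*A+2)*2^(K'-K-1)) * 2^(d-K') ≤ min (Pv d K A) (Pv d (K+1) B) := by
              refine le_min ?_ ?_
              · rw [pA]; exact mul_le_mul_left (mul_le_mul_left (by omega) _) _
              · rw [pB]; exact mul_le_mul_left (mul_le_mul_left (by omega) _) _
          _ ≤ max (Pv d K' A') (Pv d K' (A'+1)) := i1
          _ ≤ (4*A'+6) * 2^(d-K') := by
              refine max_le ?_ (le_of_eq pB')
              rw [pA']; exact mul_le_mul_left (by omega) _
      have c2 : 4*A'+2 ≤ (8*A+6)*2^(K'-K-1) := by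
        apply cancelF Fpos
        calc (4*A'+2) * 2^(d-K') ≤ min (Pv d K' A') (Pv d K' (A'+1)) := by
              refine le_min (le_of_eq pA'.symm) ?_
              rw [pB']; exact mul_le_mul_left (by omega) _
          _ ≤ max (Pv d K A) (Pv d (K+1) B) := i2
          _ ≤ ((8*A+6)*2^(K'-K-1)) * 2^(d-K') := by
              refine max_le ?_ ?_
              · rw [pA]; exact mul_le_mul_left (mul_le_mul_left (by omega) _) _
              · rw [pB]; exact mul_le_mul_left (mul_le_mul_left (by omega) _) _
      have hpow : (2:ℕ)^(K'-K) = 2^(K'-K-1) * 2 := by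
        rw [← pow_succ]; congr 1; omega
      have m1 : tr K A < tr K' A' := by
        refine desc_t2 K K' A A' hLT ?_ ?_ <;> rw [hpow] <;> linarith
      have m2 : tr K A < tr K' (A'+1) := by
        refine desc_t2 K K' A (A'+1) hLT ?_ ?_ <;> rw [hpow] <;> linarith
      have hm : min (tr K A) (tr (K+1) B) = tr K A := min_eq_left hch.le
      rw [hm] at hmin
      have hf := lt_min m1 m2
      rw [hmin] at hf
      exact lt_irrefl _ hf


/-- both edges tree edges: (K,A)-(K+1,B) and (K',A')-(K'+1,B'). -/
lemma core_tt (d K A B K' A' B' : ℕ) (hK'd : K'+1 ≤ d) (hKK : K ≤ K')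
    (hB : B = 2*A ∨ B = 2*A+1) (hB' : B' = 2*A' ∨ B' = 2*A'+1)
    (e1 : ¬(K = K' ∧ A = A'))
    (hmin : min (tr K A) (tr (K+1) B) = min (tr K' A') (tr (K'+1) B'))
    (i1 : min (Pv d K A) (Pv d (K+1) B) ≤ max (Pv d K' A') (Pv d (K'+1) B'))
    (i2 : min (Pv d K' A') (Pv d (K'+1) B') ≤ max (Pv d K A) (Pv d (K+1) B)) : False := by
  have hBb : 2*A ≤ B ∧ B ≤ 2*A+1 := by rcases hB with h|h <;> omega
  have hBb' : 2*A' ≤ B' ∧ B' ≤ 2*A'+1 := by rcases hB' with h|h <;> omega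
  have hch : tr K A < tr (K+1) B := by
    have := tr_lt_child K B
    rwa [show B/2 = A from by omega] at this
  rcases Nat.eq_or_lt_of_le hKK with hE | hLT
  · subst hE
    have Fpos : (0:ℕ) < 2^(d-K-1) := pow_pos (by norm_num) _
    have pA : Pv d K A = (8*A+4) * 2^(d-K-1) := by
      rw [Pv_split d K A 2 (d-K-1) (by omega)]; ring_nf
    have pB : Pv d (K+1) B = (4*B+2) * 2^(d-K-1) := by
      rw [Pv_split d (K+1) B 1 (d-K-1) (by omega)]; ring_nf
    have pA' : Pv d K A' = (8*A'+4) * 2^(d-K-1) := by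
      rw [Pv_split d K A' 2 (d-K-1) (by omega)]; ring_nf
    have pB' : Pv d (K+1) B' = (4*B'+2) * 2^(d-K-1) := by
      rw [Pv_split d (K+1) B' 1 (d-K-1) (by omega)]; ring_nf
    have c1 : 8*A+2 ≤ 8*A'+6 := by
      apply cancelF Fpos
      calc (8*A+2) * 2^(d-K-1) ≤ min (Pv d K A) (Pv d (K+1) B) := by
            refine le_min ?_ ?_
            · rw [pA]; exact mul_le_mul_left (by omega) _
            · rw [pB]; exact mul_le_mul_left (by omega) _
        _ ≤ max (Pv d K A') (Pv d (K+1) B') := i1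
        _ ≤ (8*A'+6) * 2^(d-K-1) := by
            refine max_le ?_ ?_
            · rw [pA']; exact mul_le_mul_left (by omega) _
            · rw [pB']; exact mul_le_mul_left (by omega) _
    have c2 : 8*A'+2 ≤ 8*A+6 := by
      apply cancelF Fpos
      calc (8*A'+2) * 2^(d-K-1) ≤ min (Pv d K A') (Pv d (K+1) B') := by
            refine le_min ?_ ?_
            · rw [pA']; exact mul_le_mul_left (by omega) _
            · rw [pB']; exact mul_le_mul_left (by omega) _
        _ ≤ max (Pv d K A) (Pv d (K+1) B) := i2
        _ ≤ (8*A+6) * 2^(d-K-1) := by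
            refine max_le ?_ ?_
            · rw [pA]; exact mul_le_mul_left (by omega) _
            · rw [pB]; exact mul_le_mul_left (by omega) _
    have d1 : ¬(A = A') := fun h => e1 ⟨rfl, h⟩
    omega
  · have Fpos : (0:ℕ) < 2^(d-K'-1) := pow_pos (by norm_num) _
    have hM : 1 ≤ 2^(K'-K-1) := one_le_pow _
    have pA : Pv d K A = ((16*A+8)*2^(K'-K-1)) * 2^(d-K'-1) := by
      rw [Pv_split d K A ((K'-K-1)+3) (d-K'-1) (by omega), pow_add]
      congr 1; ring
    have pB : Pv d (K+1) B = ((8*B+4)*2^(K'-K-1)) * 2^(d-K'-1) := by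
      rw [Pv_split d (K+1) B ((K'-K-1)+2) (d-K'-1) (by omega), pow_add]
      congr 1; ring
    have pA' : Pv d K' A' = (8*A'+4) * 2^(d-K'-1) := by
      rw [Pv_split d K' A' 2 (d-K'-1) (by omega)]; ring_nf
    have pB' : Pv d (K'+1) B' = (4*B'+2) * 2^(d-K'-1) := by
      rw [Pv_split d (K'+1) B' 1 (d-K'-1) (by omega)]; ring_nf
    have c1 : (16*A+4)*2^(K'-K-1) ≤ 8*A'+6 := by
      apply cancelF Fpos
      calc ((16*A+4)*2^(K'-K-1)) * 2^(d-K'-1) ≤ min (Pv d K A) (Pv d (K+1) B) := by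
            refine le_min ?_ ?_
            · rw [pA]; exact mul_le_mul_left (mul_le_mul_left (by omega) _) _
            · rw [pB]; exact mul_le_mul_left (mul_le_mul_left (by omega) _) _
        _ ≤ max (Pv d K' A') (Pv d (K'+1) B') := i1
        _ ≤ (8*A'+6) * 2^(d-K'-1) := by
            refine max_le ?_ ?_
            · rw [pA']; exact mul_le_mul_left (by omega) _
            · rw [pB']; exact mul_le_mul_left (by omega) _
    have c2 : 8*A'+2 ≤ (16*A+12)*2^(K'-K-1) := by
      apply cancelF Fpos
      calc (8*A'+2) * 2^(d-K'-1) ≤ min (Pv d K' A') (Pv d (K'+1) B') := by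
            refine le_min ?_ ?_
            · rw [pA']; exact mul_le_mul_left (by omega) _
            · rw [pB']; exact mul_le_mul_left (by omega) _
        _ ≤ max (Pv d K A) (Pv d (K+1) B) := i2
        _ ≤ ((16*A+12)*2^(K'-K-1)) * 2^(d-K'-1) := by
            refine max_le ?_ ?_
            · rw [pA]; exact mul_le_mul_left (mul_le_mul_left (by omega) _) _
            · rw [pB]; exact mul_le_mul_left (mul_le_mul_left (by omega) _) _
    have hpow1 : (2:ℕ)^(K'-K) = 2^(K'-K-1) * 2 := by
      rw [← pow_succ]; congr 1; omega
    have hpow2 : (2:ℕ)^(K'+1-K) = 2^(K'-K-1) * 4 := by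
      rw [show (4:ℕ) = 2^2 from by norm_num, ← pow_add]; congr 1; omega
    have m1 : tr K A < tr K' A' := by
      refine desc_t2 K K' A A' hLT ?_ ?_ <;> rw [hpow1] <;> linarith
    have m2 : tr K A < tr (K'+1) B' := by
      refine desc_t2 K (K'+1) A B' (by omega) ?_ ?_ <;> rw [hpow2] <;>
        linarith [hBb'.1, hBb'.2]
    have hm : min (tr K A) (tr (K+1) B) = tr K A := min_eq_left hch.le
    rw [hm] at hmin
    have hf := lt_min m1 m2
    rw [hmin] at hf
    exact lt_irrefl _ hf


def ShN (K A L B : ℕ) : Prop :=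
  (L = K ∧ B = A+1) ∨ (L = K+1 ∧ (B = 2*A ∨ B = 2*A+1))

lemma shn_tr_ne {K A L B : ℕ} (hr : B < 2^L) (s : ShN K A L B) :
    tr K A ≠ tr L B := by
  rcases s with ⟨hL, hB⟩ | ⟨hL, hB⟩
  · rw [hL, hB]
    rw [hL, hB] at hr
    have := tr_level K A hr
    omega
  · rw [hL]
    have h2 := tr_lt_child K B
    rw [show B/2 = A from by omega] at h2
    omega

lemma core_main (d K A L B K' A' L' B' : ℕ)
    (hLd : L ≤ d) (hL'd : L' ≤ d)
    (s1 : ShN K A L B) (s2 : ShN K' A' L' B')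
    (e1 : ¬(K = K' ∧ A = A')) (e2 : ¬(K = L' ∧ A = B'))
    (e3 : ¬(L = K' ∧ B = A')) (e4 : ¬(L = L' ∧ B = B'))
    (hmin : min (tr K A) (tr L B) = min (tr K' A') (tr L' B'))
    (i1 : min (Pv d K A) (Pv d L B) ≤ max (Pv d K' A') (Pv d L' B'))
    (i2 : min (Pv d K' A') (Pv d L' B') ≤ max (Pv d K A) (Pv d L B)) : False := by
  rcases s1 with ⟨hL, hB⟩ | ⟨hL, hB⟩
  · rcases s2 with ⟨hL', hB'⟩ | ⟨hL', hB'⟩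
    · -- level, level
      rw [hL, hB] at e3 e4 hmin i1 i2
      rw [hL', hB'] at e2 e4 hmin i1 i2
      rw [hL] at hLd
      rw [hL'] at hL'd
      rcases le_total K K' with h | h
      · exact core_ll d K A K' A' hL'd h e1 e2 e3 hmin i1 i2
      · refine core_ll d K' A' K A hLd h ?_ ?_ ?_ hmin.symm i2 i1
        · exact fun hh => e1 ⟨hh.1.symm, hh.2.symm⟩
        · exact fun hh => e3 ⟨hh.1.symm, hh.2.symm⟩
        · exact fun hh => e2 ⟨hh.1.symm, hh.2.symm⟩
    · -- level, tree
      rw [hL, hB] at e3 e4 hmin i1 i2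
      rw [hL'] at e2 e4 hL'd hmin i1 i2
      rw [hL] at hLd
      rcases le_total K K' with h | h
      · exact core_lt d K A K' A' B' hL'd h hB' e1 e3 hmin i1 i2
      · refine core_tl d K' A' B' K A hL'd hLd h hB' ?_ ?_ ?_ ?_ hmin.symm i2 i1
        · exact fun hh => e1 ⟨hh.1.symm, hh.2.symm⟩
        · exact fun hh => e3 ⟨hh.1.symm, hh.2.symm⟩
        · exact fun hh => e2 ⟨hh.1.symm, hh.2.symm⟩
        · exact fun hh => e4 ⟨hh.1.symm, hh.2.symm⟩
  · rcases s2 with ⟨hL', hB'⟩ | ⟨hL', hB'⟩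
    · -- tree, level
      rw [hL] at e3 e4 hLd hmin i1 i2
      rw [hL', hB'] at e2 e4 hmin i1 i2
      rw [hL'] at hL'd
      rcases le_total K K' with h | h
      · exact core_tl d K A B K' A' hLd hL'd h hB e1 e2 e3 e4 hmin i1 i2
      · refine core_lt d K' A' K A B hLd h hB ?_ ?_ hmin.symm i2 i1
        · exact fun hh => e1 ⟨hh.1.symm, hh.2.symm⟩
        · exact fun hh => e2 ⟨hh.1.symm, hh.2.symm⟩
    · -- tree, tree
      rw [hL] at e3 e4 hLd hmin i1 i2
      rw [hL'] at e2 e4 hL'd hmin i1 i2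
      rcases le_total K K' with h | h
      · exact core_tt d K A B K' A' B' hL'd h hB hB' e1 hmin i1 i2
      · refine core_tt d K' A' B' K A B hLd h hB' hB ?_ hmin.symm i2 i1
        exact fun hh => e1 ⟨hh.1.symm, hh.2.symm⟩

end XTP

/-- The X-tree `XT_d`: a complete binary tree of depth `d` together with edges joining
consecutive vertices of each level. The vertex `⟨k, j⟩` represents the `(j+1)`-st
vertex (of `2^k`) of level `k`; its children are `⟨k+1, 2j⟩` and `⟨k+1, 2j+1⟩`, and
level edges join `⟨k, j⟩` and `⟨k, j+1⟩`. -/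
def XTree (d : ℕ) : SimpleGraph ((k : Fin (d + 1)) × Fin (2 ^ (k : ℕ))) :=
  SimpleGraph.fromRel (fun p q =>
    ((q.1 : ℕ) = (p.1 : ℕ) + 1 ∧
      ((q.2 : ℕ) = 2 * (p.2 : ℕ) ∨ (q.2 : ℕ) = 2 * (p.2 : ℕ) + 1)) ∨
    ((q.1 : ℕ) = (p.1 : ℕ) ∧ (q.2 : ℕ) = (p.2 : ℕ) + 1))

namespace XTP

variable {d : ℕ}

lemma vtx_eq {p q : (k : Fin (d + 1)) × Fin (2 ^ (k : ℕ))}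
    (h1 : (p.1 : ℕ) = (q.1 : ℕ)) (h2 : (p.2 : ℕ) = (q.2 : ℕ)) : p = q := by
  obtain ⟨⟨k, hk⟩, ⟨j, hj⟩⟩ := p
  obtain ⟨⟨k', hk'⟩, ⟨j', hj'⟩⟩ := q
  dsimp only at h1 h2
  subst h1
  subst h2
  rfl

lemma adj_rel {p q : (k : Fin (d + 1)) × Fin (2 ^ (k : ℕ))} (h : (XTree d).Adj p q) :
    p ≠ q ∧
      ((((q.1 : ℕ) = (p.1 : ℕ) + 1 ∧
          ((q.2 : ℕ) = 2 * (p.2 : ℕ) ∨ (q.2 : ℕ) = 2 * (p.2 : ℕ) + 1)) ∨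
        ((q.1 : ℕ) = (p.1 : ℕ) ∧ (q.2 : ℕ) = (p.2 : ℕ) + 1)) ∨
       (((p.1 : ℕ) = (q.1 : ℕ) + 1 ∧
          ((p.2 : ℕ) = 2 * (q.2 : ℕ) ∨ (p.2 : ℕ) = 2 * (q.2 : ℕ) + 1)) ∨
        ((p.1 : ℕ) = (q.1 : ℕ) ∧ (p.2 : ℕ) = (q.2 : ℕ) + 1))) := by
  rwa [XTree, SimpleGraph.fromRel_adj] at h

lemma rel_shn {p q : (k : Fin (d + 1)) × Fin (2 ^ (k : ℕ))}
    (h : ((q.1 : ℕ) = (p.1 : ℕ) + 1 ∧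
          ((q.2 : ℕ) = 2 * (p.2 : ℕ) ∨ (q.2 : ℕ) = 2 * (p.2 : ℕ) + 1)) ∨
        ((q.1 : ℕ) = (p.1 : ℕ) ∧ (q.2 : ℕ) = (p.2 : ℕ) + 1)) :
    ShN (p.1 : ℕ) (p.2 : ℕ) (q.1 : ℕ) (q.2 : ℕ) := by
  rcases h with ⟨h1, h2⟩ | ⟨h1, h2⟩
  · exact Or.inr ⟨h1, h2⟩
  · exact Or.inl ⟨h1, h2⟩

lemma shn_ne {p q : (k : Fin (d + 1)) × Fin (2 ^ (k : ℕ))}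
    (h : ShN (p.1 : ℕ) (p.2 : ℕ) (q.1 : ℕ) (q.2 : ℕ)) :
    tr (p.1 : ℕ) (p.2 : ℕ) ≠ tr (q.1 : ℕ) (q.2 : ℕ) :=
  shn_tr_ne q.2.isLt h

lemma adj_tr_ne {p q : (k : Fin (d + 1)) × Fin (2 ^ (k : ℕ))} (h : (XTree d).Adj p q) :
    tr (p.1 : ℕ) (p.2 : ℕ) ≠ tr (q.1 : ℕ) (q.2 : ℕ) := by
  obtain ⟨-, hr | hr⟩ := adj_rel h
  · exact shn_ne (rel_shn hr)
  · exact (shn_ne (rel_shn hr)).symm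

end XTP

open XTP in
/-- Every X-tree admits a track layout with tracks indexed by `ℕ` in which every level
edge has span exactly `1` and every tree edge has span at most `2`. -/
theorem xTree_span_layout (d : ℕ) :
    ∃ (track : ((k : Fin (d + 1)) × Fin (2 ^ (k : ℕ))) → ℕ)
      (pos : ((k : Fin (d + 1)) × Fin (2 ^ (k : ℕ))) → ℕ),
      IsTrackLayout (XTree d) track pos ∧
      (∀ ⦃p q⦄, (XTree d).Adj p q → p.1 = q.1 →
        Nat.dist (track p) (track q) = 1) ∧
      (∀ ⦃p q⦄, (XTree d).Adj p q → p.1 ≠ q.1 →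
        Nat.dist (track p) (track q) ≤ 2) := by
  refine ⟨fun p => tr (p.1 : ℕ) (p.2 : ℕ), fun p => Pv d (p.1 : ℕ) (p.2 : ℕ),
    ⟨?_, ?_, ?_⟩, ?_, ?_⟩
  · -- injectivity of pos
    intro p q h
    dsimp only at h
    rw [Pv, Pv] at h
    obtain ⟨h1, h2⟩ := pow_inj_odd _ _ _ _ h
    have hp : (p.1 : ℕ) < d + 1 := p.1.isLt
    have hq : (q.1 : ℕ) < d + 1 := q.1.isLt
    exact vtx_eq (by omega) h2
  · -- adjacent vertices on distinct tracks
    intro u v h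
    exact adj_tr_ne h
  · -- no X-crossing
    intro u v x y h1 h2 htu htv hp1 hp2
    dsimp only at htu htv hp1 hp2
    obtain ⟨hne1, hor1⟩ := adj_rel h1
    obtain ⟨hne2, hor2⟩ := adj_rel h2
    have tne1 := adj_tr_ne h1
    have tne2 := adj_tr_ne h2
    have hux : u ≠ x := by
      intro h; rw [h] at hp1; exact lt_irrefl _ hp1
    have hvy : v ≠ y := by
      intro h; rw [h] at hp2; exact lt_irrefl _ hp2
    have huy : u ≠ y := by
      intro h; exact tne2 (by rw [← htu, h])
    have hvx : v ≠ x := by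
      intro h; exact tne1 (htu.trans (by rw [h]))
    have cux : ¬((u.1 : ℕ) = (x.1 : ℕ) ∧ (u.2 : ℕ) = (x.2 : ℕ)) :=
      fun hh => hux (vtx_eq hh.1 hh.2)
    have cuy : ¬((u.1 : ℕ) = (y.1 : ℕ) ∧ (u.2 : ℕ) = (y.2 : ℕ)) :=
      fun hh => huy (vtx_eq hh.1 hh.2)
    have cvx : ¬((v.1 : ℕ) = (x.1 : ℕ) ∧ (v.2 : ℕ) = (x.2 : ℕ)) :=
      fun hh => hvx (vtx_eq hh.1 hh.2)
    have cvy : ¬((v.1 : ℕ) = (y.1 : ℕ) ∧ (v.2 : ℕ) = (y.2 : ℕ)) :=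
      fun hh => hvy (vtx_eq hh.1 hh.2)
    have hvd : (v.1 : ℕ) ≤ d := by have := v.1.isLt; omega
    have hyd : (y.1 : ℕ) ≤ d := by have := y.1.isLt; omega
    have hud : (u.1 : ℕ) ≤ d := by have := u.1.isLt; omega
    have hxd : (x.1 : ℕ) ≤ d := by have := x.1.isLt; omega
    have hmin : min (tr (u.1:ℕ) (u.2:ℕ)) (tr (v.1:ℕ) (v.2:ℕ))
        = min (tr (x.1:ℕ) (x.2:ℕ)) (tr (y.1:ℕ) (y.2:ℕ)) := by rw [htu, htv]
    have i1 : min (Pv d (u.1:ℕ) (u.2:ℕ)) (Pv d (v.1:ℕ) (v.2:ℕ))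
        ≤ max (Pv d (x.1:ℕ) (x.2:ℕ)) (Pv d (y.1:ℕ) (y.2:ℕ)) :=
      (min_le_left _ _).trans (hp1.le.trans (le_max_left _ _))
    have i2 : min (Pv d (x.1:ℕ) (x.2:ℕ)) (Pv d (y.1:ℕ) (y.2:ℕ))
        ≤ max (Pv d (u.1:ℕ) (u.2:ℕ)) (Pv d (v.1:ℕ) (v.2:ℕ)) :=
      (min_le_right _ _).trans (hp2.le.trans (le_max_right _ _))
    rcases hor1 with hr1 | hr1 <;> rcases hor2 with hr2 | hr2
    · exact core_main d _ _ _ _ _ _ _ _ hvd hyd (rel_shn hr1) (rel_shn hr2)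
        cux cuy cvx cvy hmin i1 i2
    · exact core_main d _ _ _ _ _ _ _ _ hvd hxd (rel_shn hr1) (rel_shn hr2)
        cuy cux cvy cvx (hmin.trans (min_comm _ _)) (i1.trans_eq (max_comm _ _))
        ((min_comm _ _).trans_le i2)
    · exact core_main d _ _ _ _ _ _ _ _ hud hyd (rel_shn hr1) (rel_shn hr2)
        cvx cvy cux cuy ((min_comm _ _).trans hmin) ((min_comm _ _).trans_le i1)
        (i2.trans_eq (max_comm _ _))
    · exact core_main d _ _ _ _ _ _ _ _ hud hxd (rel_shn hr1) (rel_shn hr2)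
        cvy cvx cuy cux ((min_comm _ _).trans (hmin.trans (min_comm _ _)))
        (((min_comm _ _).trans_le i1).trans_eq (max_comm _ _))
        (((min_comm _ _).trans_le i2).trans_eq (max_comm _ _))
  · -- level edges have span 1
    intro p q hadj hk
    dsimp only
    have hkn : (p.1 : ℕ) = (q.1 : ℕ) := by rw [hk]
    obtain ⟨hne, hr | hr⟩ := adj_rel hadj
    · rcases hr with ⟨h1, -⟩ | ⟨h1, h2⟩
      · omega
      · have hpow : (2:ℕ)^(q.1:ℕ) = 2^(p.1:ℕ) := by rw [h1]
        have hq2 := q.2.isLt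
        have hlt : (p.2 : ℕ) + 1 < 2^(p.1 : ℕ) := by omega
        have := tr_level (p.1 : ℕ) (p.2 : ℕ) hlt
        have e : tr (q.1:ℕ) (q.2:ℕ) = tr (p.1:ℕ) ((p.2:ℕ)+1) :=
          congr (congrArg tr h1) h2
        rw [e]
        simp only [Nat.dist]
        omega
    · rcases hr with ⟨h1, -⟩ | ⟨h1, h2⟩
      · omega
      · have hpow : (2:ℕ)^(p.1:ℕ) = 2^(q.1:ℕ) := by rw [h1]
        have hp2 := p.2.isLt
        have hlt : (q.2 : ℕ) + 1 < 2^(q.1 : ℕ) := by omega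
        have := tr_level (q.1 : ℕ) (q.2 : ℕ) hlt
        have e : tr (p.1:ℕ) (p.2:ℕ) = tr (q.1:ℕ) ((q.2:ℕ)+1) :=
          congr (congrArg tr h1) h2
        rw [e]
        simp only [Nat.dist]
        omega
  · -- tree edges have span at most 2
    intro p q hadj hk
    dsimp only
    have hkn : ¬((p.1 : ℕ) = (q.1 : ℕ)) := by
      intro h; exact hk (Fin.ext h)
    obtain ⟨hne, hr | hr⟩ := adj_rel hadj
    · rcases hr with ⟨h1, h2⟩ | ⟨h1, -⟩
      · rcases h2 with h2 | h2
        · have e : tr (q.1:ℕ) (q.2:ℕ) = tr (p.1:ℕ) (p.2:ℕ) + 1 + (p.2:ℕ) % 2 :=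
            (congr (congrArg tr h1) h2).trans (tr_child0 _ _)
          simp only [Nat.dist]; omega
        · have e : tr (q.1:ℕ) (q.2:ℕ) = tr (p.1:ℕ) (p.2:ℕ) + 1 + ((p.2:ℕ)+1) % 2 :=
            (congr (congrArg tr h1) h2).trans (tr_child1 _ _)
          simp only [Nat.dist]; omega
      · omega
    · rcases hr with ⟨h1, h2⟩ | ⟨h1, -⟩
      · rcases h2 with h2 | h2
        · have e : tr (p.1:ℕ) (p.2:ℕ) = tr (q.1:ℕ) (q.2:ℕ) + 1 + (q.2:ℕ) % 2 :=
            (congr (congrArg tr h1) h2).trans (tr_child0 _ _)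
          simp only [Nat.dist]; omega
        · have e : tr (p.1:ℕ) (p.2:ℕ) = tr (q.1:ℕ) (q.2:ℕ) + 1 + ((q.2:ℕ)+1) % 2 :=
            (congr (congrArg tr h1) h2).trans (tr_child1 _ _)
          simp only [Nat.dist]; omega
      · omega
end
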